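/- arXiv:1708.00732 — 6 statements merged into one kernel-verified Lean document; each statement's English description precedes it below -/
import Mathlib

section
/- Let x: [0,∞) → ℝ be càdlàg and let (x^ε)_{ε>0} be càdlàg paths of locally finite total variation with sup_{s≥0} |x_s − x^ε_s| ≤ ε for every ε > 0. If the limit ⟨x⟩_t := 2 lim_{ε→0+} ∫_{(0,t]} (x_s − x^ε_s) dx^ε_s exists uniformly on compact subsets of [0,∞), then the function t ↦ ⟨x⟩_t is continuous on [0,∞). -/
open MeasureTheory Filter Topology Set
open scoped Classical

noncomputable section

/-- The jump `Δf_s = f s - f (s-)` of a path at a point. -/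
def jmp (f : ℝ → ℝ) (s : ℝ) : ℝ := f s - Function.leftLim f s

/-- A path `f : ℝ → ℝ` (thought of as a path on `[0,∞)`) is càdlàg: right-continuous at
every `t ≥ 0` and with finite left limits at every `t > 0`. -/
def Cadlag (f : ℝ → ℝ) : Prop :=
  (∀ t : ℝ, 0 ≤ t → ContinuousWithinAt f (Ici t) t) ∧
    ∀ t : ℝ, 0 < t → Tendsto f (𝓝[<] t) (𝓝 (Function.leftLim f t))

/-- `p = (u, v)` is a decomposition of `y` on `[0,∞)` as a difference of two nondecreasing
right-continuous functions. -/
def IsBVDecompOn (y : ℝ → ℝ) (p : StieltjesFunction ℝ × StieltjesFunction ℝ) : Prop :=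
  ∀ s : ℝ, 0 ≤ s → y s = p.1 s - p.2 s

/-- `y` has locally finite total variation on `[0,∞)`: for right-continuous `y` with left
limits this is equivalent to admitting a Jordan decomposition `y = u - v` with `u, v`
nondecreasing and right-continuous. -/
def LocBV (y : ℝ → ℝ) : Prop := ∃ p, IsBVDecompOn y p

/-- The Lebesgue–Stieltjes integral `∫_{(0,t]} g dy` of `g` with respect to the signed
Lebesgue–Stieltjes measure `μ_u - μ_v`, where `y = u - v` with `u, v` nondecreasing and
right-continuous.  (For integrable `g` its value does not depend on the choice of the
decomposition.) -/
def lsInt (y g : ℝ → ℝ) (t : ℝ) : ℝ :=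
  if h : ∃ p, IsBVDecompOn y p then
    (∫ s in Ioc (0:ℝ) t, g s ∂(h.choose.1.measure)) -
      ∫ s in Ioc (0:ℝ) t, g s ∂(h.choose.2.measure)
  else 0

/-- The integral `∫_{(0,t]} |g| |dy|` of `|g|` with respect to the total variation measure of
the signed Lebesgue–Stieltjes measure of `y`; it is computed from a minimal (mutually
singular on `(0,∞)`) decomposition of `y`, for which the total variation measure is
`μ_u + μ_v`. -/
def lsAbs (y g : ℝ → ℝ) (t : ℝ) : ℝ :=
  if h : ∃ p, IsBVDecompOn y p ∧
      (p.1.measure.restrict (Ioi 0)).MutuallySingular (p.2.measure.restrict (Ioi 0)) then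
    ∫ s in Ioc (0:ℝ) t, |g s| ∂(h.choose.1.measure + h.choose.2.measure)
  else 0

/-- The truncated variation of `x` on `[a,b]` with truncation parameter `ε`. -/
def TTV (x : ℝ → ℝ) (a b ε : ℝ) : ℝ :=
  sSup {v : ℝ | ∃ (n : ℕ) (t : ℕ → ℝ), a ≤ t 0 ∧ t n ≤ b ∧ (∀ i, i < n → t i < t (i + 1)) ∧
    v = ∑ i ∈ Finset.range n, max (|x (t (i + 1)) - x (t i)| - ε) 0}

/-- The upward truncated variation of `x` on `[a,b]` with truncation parameter `ε`. -/
def UTV (x : ℝ → ℝ) (a b ε : ℝ) : ℝ :=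
  sSup {v : ℝ | ∃ (n : ℕ) (t : ℕ → ℝ), a ≤ t 0 ∧ t n ≤ b ∧ (∀ i, i < n → t i < t (i + 1)) ∧
    v = ∑ i ∈ Finset.range n, max (x (t (i + 1)) - x (t i) - ε) 0}

/-- The downward truncated variation of `x` on `[a,b]` with truncation parameter `ε`. -/
def DTV (x : ℝ → ℝ) (a b ε : ℝ) : ℝ :=
  sSup {v : ℝ | ∃ (n : ℕ) (t : ℕ → ℝ), a ≤ t 0 ∧ t n ≤ b ∧ (∀ i, i < n → t i < t (i + 1)) ∧
    v = ∑ i ∈ Finset.range n, max (x (t i) - x (t (i + 1)) - ε) 0}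

/-- The standing assumptions: `x` is càdlàg with `Σ_{0<s≤t} (Δx_s)² < ∞` for all `t > 0`;
`𝒳 = (xe ε)_{ε>0}` is a family of càdlàg paths of locally finite total variation with
`sup_{s ≥ 0} |x s - xe ε s| ≤ ε`; `q = ⟨x⟩` is the uniform-on-compacts limit of
`2 ∫_{(0,·]} (x - xe ε) d(xe ε)` as `ε → 0+`;
`sup_{ε>0} ∫_{(0,t]} |x - xe ε| |d(xe ε)| < ∞` for every `t > 0`; and there is a constant
`K` with `|Δ(xe ε)_s| ≤ K |Δx_s|` for all `s > 0` and `ε > 0`. -/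
structure StandingAssumptions (x : ℝ → ℝ) (xe : ℝ → ℝ → ℝ) (q : ℝ → ℝ) : Prop where
  cadlag_x : Cadlag x
  jumps_sq_summable : ∀ t : ℝ, 0 < t → Summable fun s : Ioc (0:ℝ) t => jmp x (s : ℝ) ^ 2
  cadlag_xe : ∀ ε : ℝ, 0 < ε → Cadlag (xe ε)
  bv_xe : ∀ ε : ℝ, 0 < ε → LocBV (xe ε)
  approx : ∀ ε : ℝ, 0 < ε → ∀ s : ℝ, 0 ≤ s → |x s - xe ε s| ≤ ε
  qv_unif : ∀ T : ℝ, 0 ≤ T →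
    TendstoUniformlyOn (fun ε s => 2 * lsInt (xe ε) (fun r => x r - xe ε r) s) q
      (𝓝[>] 0) (Icc 0 T)
  bdd : ∀ t : ℝ, 0 < t → ∃ C : ℝ, ∀ ε : ℝ, 0 < ε →
    lsAbs (xe ε) (fun r => x r - xe ε r) t ≤ C
  jump_bdd : ∃ K : ℝ, ∀ ε : ℝ, 0 < ε → ∀ s : ℝ, 0 < s → |jmp (xe ε) s| ≤ K * |jmp x s|

/-
Fix `t ≥ 0` and `ε > 0`, and write `g = x - xᵉ`, so that `|g| ≤ ε` on `[0,∞)`.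
Splitting `xᵉ = u - v`, the path `F = 2 ∫_{(0,·]} g dxᵉ` is right-continuous at `t`, and its
left limit at `t` differs from `F t` by the contribution `2 g_t Δxᵉ_t` of the atom at `t`.
Since `|Δxᵉ_t| ≤ |Δx_t| + 2ε`, this jump is at most `2ε (|Δx_t| + 2ε)`, which tends to `0`
with `ε`; as `⟨x⟩` is a uniform limit of such `F` near `t`, it is continuous at `t`.
-/

theorem continuousWithinAt_of_forall_approx {α β : Type*} [TopologicalSpace α]
    [PseudoMetricSpace β] {f : α → β} {s : Set α} {t : α}
    (h : ∀ δ > 0, ∃ F : α → β, (∀ᶠ u in 𝓝[s] t, dist (f u) (F u) < δ) ∧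
      dist (f t) (F t) < δ ∧ ∀ᶠ u in 𝓝[s] t, dist (F u) (F t) < δ) :
    ContinuousWithinAt f s t := by
  refine Metric.tendsto_nhds.2 fun δ hδ => ?_
  obtain ⟨F, hnear, hat, hosc⟩ := h (δ / 3) (by positivity)
  filter_upwards [hnear, hosc] with u hu hFu
  calc dist (f u) (f t) ≤ dist (f u) (F u) + dist (F u) (F t) + dist (F t) (f t) :=
        dist_triangle4 _ _ _ _
    _ < δ / 3 + δ / 3 + δ / 3 := by rw [dist_comm (F t)]; gcongr
    _ = δ := by ring

theorem measurable_of_continuousWithinAt_Ici {β : Type*} [TopologicalSpace β]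
    [TopologicalSpace.PseudoMetrizableSpace β] [MeasurableSpace β] [BorelSpace β] {f : ℝ → β}
    (hf : ∀ s, ContinuousWithinAt f (Ici s) s) : Measurable f := by
  set grid : ℕ → ℝ → ℝ := fun n s => ⌈s * (n + 1)⌉ / (n + 1)
  have hgrid_ge : ∀ n s, s ≤ grid n s := fun n s => by
    rw [le_div_iff₀ (by positivity)]; exact Int.le_ceil _
  have hgrid_le : ∀ n s, grid n s ≤ s + 1 / (n + 1) := fun n s => by
    rw [add_div' _ _ _ (by positivity : ((n : ℝ) + 1) ≠ 0),
      div_le_div_iff_of_pos_right (by positivity)]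
    exact (Int.ceil_lt_add_one _).le
  refine measurable_of_tendsto_metrizable (f := fun n => f ∘ grid n) (fun n => ?_) ?_
  · exact (measurable_from_top (f := fun k : ℤ => f (k / (n + 1)))).comp
      (Int.measurable_ceil.comp (measurable_id.mul_const _))
  · refine tendsto_pi_nhds.2 fun s => (hf s).tendsto.comp ?_
    refine tendsto_nhdsWithin_of_tendsto_nhds_of_eventually_within _ ?_
      (Eventually.of_forall (hgrid_ge · s))
    have hlim := (tendsto_one_div_add_atTop_nhds_zero_nat).const_add s
    rw [add_zero] at hlim
    exact tendsto_of_tendsto_of_tendsto_of_le_of_le tendsto_const_nhds hlim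
      (hgrid_ge · s) (hgrid_le · s)

theorem aestronglyMeasurable_of_continuousWithinAt_Ici {g : ℝ → ℝ}
    (hg : ∀ s, 0 ≤ s → ContinuousWithinAt g (Ici s) s) (μ : Measure ℝ) :
    AEStronglyMeasurable g (μ.restrict (Ici 0)) := by
  have hmax : Measurable fun s => g (max s 0) :=
    measurable_of_continuousWithinAt_Ici fun s =>
      (hg _ (le_max_right s 0)).comp (f := fun u => max u 0)
        (continuous_id.max continuous_const).continuousWithinAt
        fun _ hu => show max s 0 ≤ max _ 0 from max_le_max_right 0 hu
  refine hmax.aestronglyMeasurable.congr ?_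
  filter_upwards [ae_restrict_mem measurableSet_Ici] with s hs
  rw [max_eq_left hs]

theorem tendsto_setIntegral_of_measureReal_tendsto_zero {α ι E : Type*} [MeasurableSpace α]
    [NormedAddCommGroup E] [NormedSpace ℝ E] {μ : Measure α} {l : Filter ι} {s : ι → Set α}
    {f : α → E} {C : ℝ} (hfin : ∀ᶠ i in l, μ (s i) < ⊤)
    (hC : ∀ᶠ i in l, ∀ x ∈ s i, ‖f x‖ ≤ C) (hs : Tendsto (fun i => μ.real (s i)) l (𝓝 0)) :
    Tendsto (fun i => ∫ x in s i, f x ∂μ) l (𝓝 0) := by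
  refine squeeze_zero_norm' ?_ (by simpa using hs.const_mul C)
  filter_upwards [hfin, hC] with i hi hCi
  exact norm_setIntegral_le_of_norm_le_const hi hCi

namespace StieltjesFunction

variable (f : StieltjesFunction ℝ)

theorem measureReal_Ioc {a b : ℝ} (hab : a ≤ b) : f.measure.real (Ioc a b) = f b - f a := by
  rw [measureReal_def, f.measure_Ioc, ENNReal.toReal_ofReal (sub_nonneg.2 (f.mono hab))]

theorem measureReal_Ioo {a b : ℝ} (hab : a < b) :
    f.measure.real (Ioo a b) = Function.leftLim f b - f a := by
  rw [measureReal_def, f.measure_Ioo, ENNReal.toReal_ofReal (sub_nonneg.2 (f.mono.le_leftLim hab))]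

theorem measureReal_singleton (a : ℝ) : f.measure.real {a} = f a - Function.leftLim f a := by
  rw [measureReal_def, f.measure_singleton,
    ENNReal.toReal_ofReal (sub_nonneg.2 (f.mono.leftLim_le le_rfl))]

theorem tendsto_measureReal_Ioc_nhdsGE (t : ℝ) :
    Tendsto (fun u => f.measure.real (Ioc t u)) (𝓝[≥] t) (𝓝 0) := by
  have hlim : Tendsto (fun u => f u - f t) (𝓝[≥] t) (𝓝 0) := by
    simpa using (f.right_continuous t).tendsto.sub_const (f t)
  refine hlim.congr' ?_
  filter_upwards [self_mem_nhdsWithin] with u hu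
  rw [f.measureReal_Ioc hu]

theorem tendsto_measureReal_Ioo_nhdsLT (t : ℝ) :
    Tendsto (fun u => f.measure.real (Ioo u t)) (𝓝[<] t) (𝓝 0) := by
  have hlim : Tendsto (fun u => Function.leftLim f t - f u) (𝓝[<] t) (𝓝 0) := by
    simpa using (f.mono.tendsto_leftLim t).const_sub (Function.leftLim f t)
  refine hlim.congr' ?_
  filter_upwards [self_mem_nhdsWithin] with u hu
  rw [f.measureReal_Ioo hu]

section BoundedIntegrand

variable {f} {g : ℝ → ℝ} {C t : ℝ} (hgm : AEStronglyMeasurable g (f.measure.restrict (Ici 0)))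
  (hC : ∀ s, 0 < s → |g s| ≤ C)
include hgm hC

theorem integrableOn_Ioc {a b : ℝ} (ha : 0 ≤ a) : IntegrableOn g (Ioc a b) f.measure := by
  have hsub : Ioc a b ⊆ Ioi 0 := Ioc_subset_Ioi_self.trans (Ioi_subset_Ioi ha)
  refine IntegrableOn.of_bound measure_Ioc_lt_top
    (hgm.mono_set (hsub.trans Ioi_subset_Ici_self)) C ?_
  filter_upwards [ae_restrict_mem measurableSet_Ioc] with s hs
  exact hC s (hsub hs)

theorem setIntegral_Ioc_zero_sub {u v : ℝ} (hu : 0 ≤ u) (huv : u ≤ v) :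
    ∫ r in Ioc 0 v, g r ∂f.measure - ∫ r in Ioc 0 u, g r ∂f.measure =
      ∫ r in Ioc u v, g r ∂f.measure := by
  rw [← Ioc_union_Ioc_eq_Ioc hu huv, setIntegral_union (Ioc_disjoint_Ioc_of_le le_rfl)
    measurableSet_Ioc (integrableOn_Ioc hgm hC le_rfl) (integrableOn_Ioc hgm hC hu),
    add_sub_cancel_left]

theorem tendsto_setIntegral_Ioc_nhdsGE (ht : 0 ≤ t) :
    Tendsto (fun u => ∫ r in Ioc 0 u, g r ∂f.measure) (𝓝[≥] t)
      (𝓝 (∫ r in Ioc 0 t, g r ∂f.measure)) := by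
  rw [← tendsto_sub_nhds_zero_iff]
  have hsmall := tendsto_setIntegral_of_measureReal_tendsto_zero (f := g) (C := C)
    (Eventually.of_forall fun _ => measure_Ioc_lt_top) ?_ (f.tendsto_measureReal_Ioc_nhdsGE t)
  · refine hsmall.congr' ?_
    filter_upwards [self_mem_nhdsWithin] with u hu
    exact (setIntegral_Ioc_zero_sub hgm hC ht hu).symm
  · exact Eventually.of_forall fun u s hs => hC s (ht.trans_lt hs.1)

theorem tendsto_setIntegral_Ioc_nhdsLT (ht : 0 < t) :
    Tendsto (fun u => ∫ r in Ioc 0 u, g r ∂f.measure) (𝓝[<] t)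
      (𝓝 (∫ r in Ioc 0 t, g r ∂f.measure - (f t - Function.leftLim f t) * g t)) := by
  have hsmall := tendsto_setIntegral_of_measureReal_tendsto_zero (f := g) (C := C)
    (Eventually.of_forall fun _ => measure_Ioo_lt_top) ?_ (f.tendsto_measureReal_Ioo_nhdsLT t)
  · have hlim := hsmall.const_sub
      (∫ r in Ioc 0 t, g r ∂f.measure - (f t - Function.leftLim f t) * g t)
    rw [sub_zero] at hlim
    refine hlim.congr' ?_
    filter_upwards [Ioo_mem_nhdsLT ht] with u hu
    have hatom : ∫ r in Ioc u t, g r ∂f.measure =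
        ∫ r in Ioo u t, g r ∂f.measure + (f t - Function.leftLim f t) * g t := by
      have hint := integrableOn_Ioc hgm hC (b := t) hu.1.le
      rw [← Ioo_union_right hu.2, setIntegral_union (by simp) (measurableSet_singleton t)
        (hint.mono_set Ioo_subset_Ioc_self) (hint.mono_set (by simp [hu.2])),
        integral_singleton, measureReal_singleton, smul_eq_mul]
    linarith [setIntegral_Ioc_zero_sub hgm hC hu.1.le hu.2.le]
  · filter_upwards [Ioo_mem_nhdsLT ht] with u hu s hs using hC s (hu.1.trans hs.1)

end BoundedIntegrand

end StieltjesFunction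

namespace IsBVDecompOn

variable {y : ℝ → ℝ} {p : StieltjesFunction ℝ × StieltjesFunction ℝ} {t : ℝ}

theorem continuousWithinAt_Ici (hp : IsBVDecompOn y p) (ht : 0 ≤ t) :
    ContinuousWithinAt y (Ici t) t :=
  ((p.1.right_continuous t).sub (p.2.right_continuous t)).congr
    (fun u hu => hp u (ht.trans hu)) (hp t ht)

theorem tendsto_nhdsLT (hp : IsBVDecompOn y p) (ht : 0 < t) :
    Tendsto y (𝓝[<] t) (𝓝 (Function.leftLim p.1 t - Function.leftLim p.2 t)) := by
  refine ((p.1.mono.tendsto_leftLim t).sub (p.2.mono.tendsto_leftLim t)).congr' ?_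
  filter_upwards [Ioo_mem_nhdsLT ht] with u hu
  exact (hp u hu.1.le).symm

theorem leftLim_eq (hp : IsBVDecompOn y p) (ht : 0 < t) :
    Function.leftLim y t = Function.leftLim p.1 t - Function.leftLim p.2 t :=
  leftLim_eq_of_tendsto (hp.tendsto_nhdsLT ht)

theorem tendsto_leftLim (hp : IsBVDecompOn y p) (ht : 0 < t) :
    Tendsto y (𝓝[<] t) (𝓝 (Function.leftLim y t)) :=
  hp.leftLim_eq ht ▸ hp.tendsto_nhdsLT ht

theorem jmp_eq (hp : IsBVDecompOn y p) (ht : 0 < t) :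
    jmp y t = (p.1 t - Function.leftLim p.1 t) - (p.2 t - Function.leftLim p.2 t) := by
  rw [jmp, hp.leftLim_eq ht, hp t ht.le]
  ring

end IsBVDecompOn

section LsInt

theorem lsInt_eq {y : ℝ → ℝ} (hy : ∃ p, IsBVDecompOn y p) (g : ℝ → ℝ) :
    lsInt y g = fun t => ∫ s in Ioc 0 t, g s ∂hy.choose.1.measure -
      ∫ s in Ioc 0 t, g s ∂hy.choose.2.measure :=
  funext fun _ => dif_pos hy

variable {y g : ℝ → ℝ} {C t : ℝ} (hy : LocBV y)
  (hg : ∀ s, 0 ≤ s → ContinuousWithinAt g (Ici s) s) (hC : ∀ s, 0 < s → |g s| ≤ C)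
include hy hg hC

theorem tendsto_lsInt_nhdsGE (ht : 0 ≤ t) :
    Tendsto (lsInt y g) (𝓝[≥] t) (𝓝 (lsInt y g t)) := by
  have hgm := aestronglyMeasurable_of_continuousWithinAt_Ici hg
  rw [lsInt_eq hy]
  exact (hy.choose.1.tendsto_setIntegral_Ioc_nhdsGE (hgm _) hC ht).sub
    (hy.choose.2.tendsto_setIntegral_Ioc_nhdsGE (hgm _) hC ht)

theorem tendsto_lsInt_nhdsLT (ht : 0 < t) :
    Tendsto (lsInt y g) (𝓝[<] t) (𝓝 (lsInt y g t - jmp y t * g t)) := by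
  have hgm := aestronglyMeasurable_of_continuousWithinAt_Ici hg
  rw [lsInt_eq hy]
  convert (hy.choose.1.tendsto_setIntegral_Ioc_nhdsLT (hgm _) hC ht).sub
    (hy.choose.2.tendsto_setIntegral_Ioc_nhdsLT (hgm _) hC ht) using 2
  rw [hy.choose_spec.jmp_eq ht]
  ring

theorem eventually_abs_lsInt_sub_lt (ht : 0 ≤ t) {c : ℝ} (hc : 0 < c)
    (hjump : 0 < t → |jmp y t * g t| < c) :
    ∀ᶠ u in 𝓝[Ici 0] t, |lsInt y g u - lsInt y g t| < c := by
  have hright : ∀ᶠ u in 𝓝[≥] t, |lsInt y g u - lsInt y g t| < c := by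
    refine ((tendsto_lsInt_nhdsGE hy hg hC ht).sub_const _).abs.eventually_lt_const ?_
    simpa using hc
  rcases ht.eq_or_lt with rfl | ht
  · exact hright
  · have hleft : ∀ᶠ u in 𝓝[<] t, |lsInt y g u - lsInt y g t| < c := by
      refine ((tendsto_lsInt_nhdsLT hy hg hC ht).sub_const _).abs.eventually_lt_const ?_
      simpa using hjump ht
    exact nhdsWithin_le_nhds (nhdsLT_sup_nhdsGE t ▸ eventually_sup.2 ⟨hleft, hright⟩)

end LsInt

theorem abs_jmp_le_of_abs_sub_le {x y : ℝ → ℝ} {t ε : ℝ} (ht : 0 < t)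
    (hx : Tendsto x (𝓝[<] t) (𝓝 (Function.leftLim x t)))
    (hy : Tendsto y (𝓝[<] t) (𝓝 (Function.leftLim y t)))
    (hxy : ∀ s, 0 ≤ s → |x s - y s| ≤ ε) :
    |jmp y t| ≤ |jmp x t| + 2 * ε := by
  have hleft : |Function.leftLim x t - Function.leftLim y t| ≤ ε := by
    refine le_of_tendsto (hx.sub hy).abs ?_
    filter_upwards [Ioo_mem_nhdsLT ht] with u hu using hxy u hu.1.le
  calc |jmp y t|
      = |jmp x t + (y t - x t) + (Function.leftLim x t - Function.leftLim y t)| := by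
        rw [jmp, jmp]; ring_nf
    _ ≤ |jmp x t| + |x t - y t| + |Function.leftLim x t - Function.leftLim y t| := by
        rw [abs_sub_comm (x t)]; exact abs_add_three _ _ _
    _ ≤ |jmp x t| + 2 * ε := by linarith [hxy t ht.le]

theorem statement4_general (x : ℝ → ℝ) (xe : ℝ → ℝ → ℝ) (q : ℝ → ℝ)
    (hx : Cadlag x)
    (hbv : ∀ ε : ℝ, 0 < ε → LocBV (xe ε))
    (happ : ∀ ε : ℝ, 0 < ε → ∀ s : ℝ, 0 ≤ s → |x s - xe ε s| ≤ ε)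
    (hq : ∀ T : ℝ, 0 ≤ T →
      TendstoUniformlyOn (fun ε s => 2 * lsInt (xe ε) (fun r => x r - xe ε r) s) q
        (𝓝[>] 0) (Icc 0 T)) :
    ContinuousOn q (Ici 0) := by
  intro t (ht : 0 ≤ t)
  refine continuousWithinAt_of_forall_approx fun δ hδ => ?_
  have hjump_small : Tendsto (fun ε => 2 * ε * (|jmp x t| + 2 * ε)) (𝓝[>] 0) (𝓝 0) :=
    tendsto_nhdsWithin_of_tendsto_nhds <|
      (by fun_prop : Continuous fun ε : ℝ => 2 * ε * (|jmp x t| + 2 * ε)).tendsto' 0 0 (by simp)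
  obtain ⟨ε, ⟨hclose, hjump⟩, hε⟩ :=
    (((Metric.tendstoUniformlyOn_iff.1 (hq (t + 1) (by linarith)) δ hδ).and
      (hjump_small.eventually_lt_const hδ)).and self_mem_nhdsWithin).exists
  obtain ⟨p, hp⟩ := hbv ε hε
  have hg (s : ℝ) (hs : 0 ≤ s) : ContinuousWithinAt (fun r => x r - xe ε r) (Ici s) s :=
    (hx.1 s hs).sub (hp.continuousWithinAt_Ici hs)
  have hjump_t (ht' : 0 < t) : |jmp (xe ε) t * (x t - xe ε t)| < δ / 2 :=
    calc |jmp (xe ε) t * (x t - xe ε t)| ≤ (|jmp x t| + 2 * ε) * ε := by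
          rw [abs_mul]
          gcongr
          · exact abs_jmp_le_of_abs_sub_le ht' (hx.2 t ht') (hp.tendsto_leftLim ht') (happ ε hε)
          · exact happ ε hε t ht
      _ < δ / 2 := by linarith
  have hosc := eventually_abs_lsInt_sub_lt (hbv ε hε) hg (fun s hs => happ ε hε s hs.le) ht
    (half_pos hδ) hjump_t
  refine ⟨_, eventually_of_mem ?_ hclose, hclose t ⟨ht, by linarith⟩, ?_⟩
  · rw [← Ici_inter_Iic]
    exact inter_mem_nhdsWithin _ (Iic_mem_nhds (by linarith))
  · filter_upwards [hosc] with u hu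
    rw [Real.dist_eq, ← mul_sub, abs_mul, abs_two]
    linarith

/-- the limit `⟨x⟩` (uniform on compacts) of `2∫_{(0,·]} (x - xᵉ) dxᵉ`
is continuous on `[0,∞)`. -/
theorem statement4 (x : ℝ → ℝ) (xe : ℝ → ℝ → ℝ) (q : ℝ → ℝ)
    (hx : Cadlag x)
    (hcad : ∀ ε : ℝ, 0 < ε → Cadlag (xe ε))
    (hbv : ∀ ε : ℝ, 0 < ε → LocBV (xe ε))
    (happ : ∀ ε : ℝ, 0 < ε → ∀ s : ℝ, 0 ≤ s → |x s - xe ε s| ≤ ε)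
    (hq : ∀ T : ℝ, 0 ≤ T →
      TendstoUniformlyOn (fun ε s => 2 * lsInt (xe ε) (fun r => x r - xe ε r) s) q
        (𝓝[>] 0) (Icc 0 T)) :
    ContinuousOn q (Ici 0) :=
  statement4_general x xe q hx hbv happ hq
end
end

section
/- Let x: [0,∞) → ℝ be càdlàg with Σ_{0<s≤t} (Δx_s)² < ∞ for a fixed t > 0, let (x^ε)_{ε>0} be càdlàg paths with sup_{s≥0} |x_s − x^ε_s| ≤ ε and |Δx^ε_s| ≤ K |Δx_s| for all s > 0 and ε > 0 and some constant K, and let f: ℝ → ℝ be continuously differentiable with antiderivative F. Then each of the sums below converges absolutely and Σ_{0<s≤t} ( F(x^ε_s) − F(x^ε_{s−}) − f(x^ε_s) Δx^ε_s ) → Σ_{0<s≤t} ( F(x_s) − F(x_{s−}) − f(x_s) Δx_s ) as ε → 0+. -/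
open MeasureTheory Filter Topology Set
open scoped Classical

noncomputable section

/-
Whenever `|f'| ≤ M` on an interval containing `a` and `b`, the first-order remainder
`F b - F a - f b (b - a)` is at most `M (b - a)²`. Càdlàg paths are bounded on `[0, t]`, and the
uniform approximation bounds the paths `xe ε` and their left limits uniformly in `ε ≤ 1`, so all
jump terms are dominated by `C (Δx_s)²` with `C` independent of `ε`. This gives absolute
convergence, and dominated convergence for sums gives the limit, since
`xe ε s → x s` and `xe ε (s-) → x (s-)` pointwise.
-/

open Function (leftLim)

-- The jump term of a path `y` at `s` is `firstOrderRemainder F f (y (s-)) (y s)`.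
def firstOrderRemainder (F f : ℝ → ℝ) (a b : ℝ) : ℝ := F b - F a - f b * (b - a)

theorem continuous_firstOrderRemainder {F f : ℝ → ℝ} (hF : Continuous F) (hf : Continuous f) :
    Continuous fun p : ℝ × ℝ => firstOrderRemainder F f p.1 p.2 := by
  unfold firstOrderRemainder
  fun_prop

theorem abs_firstOrderRemainder_le {F f f' : ℝ → ℝ} (hf : ∀ y, HasDerivAt f (f' y) y)
    (hF : ∀ y, HasDerivAt F (f y) y) {M a b : ℝ} (hM : ∀ y ∈ uIcc a b, |f' y| ≤ M) :
    |firstOrderRemainder F f a b| ≤ M * (b - a) ^ 2 := by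
  have hf_sub : ∀ y ∈ uIcc a b, ‖f y - f b‖ ≤ M * |b - a| := by
    intro y hy
    calc ‖f y - f b‖ ≤ M * ‖y - b‖ :=
          (convex_uIcc a b).norm_image_sub_le_of_norm_hasDerivWithin_le
            (fun z _ => (hf z).hasDerivWithinAt) hM right_mem_uIcc hy
      _ ≤ M * |b - a| := by
          have hM0 : 0 ≤ M := (abs_nonneg _).trans (hM b right_mem_uIcc)
          rw [Real.norm_eq_abs, abs_sub_comm]
          exact mul_le_mul_of_nonneg_left (abs_sub_le_of_uIcc_subset_uIcc
            (uIcc_subset_uIcc hy right_mem_uIcc)) hM0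
  have hG : ∀ y, HasDerivAt (fun z => F z - f b * z) (f y - f b) y := fun y => by
    simpa using (hF y).fun_sub ((hasDerivAt_id y).const_mul (f b))
  have h := (convex_uIcc a b).norm_image_sub_le_of_norm_hasDerivWithin_le
    (fun z _ => (hG z).hasDerivWithinAt) hf_sub left_mem_uIcc right_mem_uIcc
  calc |firstOrderRemainder F f a b| = ‖(F b - f b * b) - (F a - f b * a)‖ := by
        rw [firstOrderRemainder, Real.norm_eq_abs]; ring_nf
    _ ≤ M * |b - a| * ‖b - a‖ := h
    _ = M * (b - a) ^ 2 := by rw [Real.norm_eq_abs, mul_assoc, ← sq, sq_abs]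

theorem abs_firstOrderRemainder_le_of_abs_le {F f f' : ℝ → ℝ} (hf : ∀ y, HasDerivAt f (f' y) y)
    (hF : ∀ y, HasDerivAt F (f y) y) {M R c d a b : ℝ} (hM : ∀ z ∈ Icc (-R) R, |f' z| ≤ M)
    (ha : |a| ≤ R) (hb : |b| ≤ R) (hab : |b - a| ≤ c * |d|) :
    |firstOrderRemainder F f a b| ≤ M * c ^ 2 * d ^ 2 := by
  have hM0 : 0 ≤ M := (abs_nonneg _).trans (hM b (abs_le.1 hb))
  calc |firstOrderRemainder F f a b|
      ≤ M * (b - a) ^ 2 :=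
        abs_firstOrderRemainder_le hf hF fun z hz =>
          hM z (uIcc_subset_Icc (abs_le.1 ha) (abs_le.1 hb) hz)
    _ ≤ M * (c * |d|) ^ 2 :=
        mul_le_mul_of_nonneg_left (sq_le_sq.2 (hab.trans (le_abs_self _))) hM0
    _ = M * c ^ 2 * d ^ 2 := by rw [mul_pow, sq_abs, mul_assoc]

theorem abs_le_of_tendsto_nhdsLT {y : ℝ → ℝ} {a s L B : ℝ} (has : a < s)
    (hy : Tendsto y (𝓝[<] s) (𝓝 L)) (hB : ∀ r ∈ Ioo a s, |y r| ≤ B) : |L| ≤ B :=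
  le_of_tendsto hy.abs (eventually_of_mem (Ioo_mem_nhdsLT has) hB)

theorem tendsto_nhdsGT_zero_of_abs_sub_le {u : ℝ → ℝ} {a : ℝ}
    (h : ∀ ε, 0 < ε → |a - u ε| ≤ ε) : Tendsto u (𝓝[>] 0) (𝓝 a) := by
  have : Tendsto (fun ε => a - u ε) (𝓝[>] 0) (𝓝 0) :=
    squeeze_zero_norm' (eventually_nhdsWithin_of_forall h)
      (tendsto_nhdsWithin_of_tendsto_nhds tendsto_id)
  simpa using (tendsto_const_nhds (x := a)).sub this

namespace Cadlag

variable {g : ℝ → ℝ}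

theorem isBounded_image_Icc (hg : Cadlag g) (t : ℝ) : Bornology.IsBounded (g '' Icc 0 t) := by
  refine isCompact_Icc.induction_on (p := fun S => Bornology.IsBounded (g '' S)) (by simp)
    (fun S T hST hT => hT.subset (image_mono hST))
    (fun S T hS hT => by simpa only [image_union] using hS.union hT) fun s hs => ?_
  -- near `s`, `g` stays close to `g s` on the right and to `g (s-)` on the left
  set U := g ⁻¹' (Metric.ball (g s) 1 ∪ Metric.ball (leftLim g s) 1)
  have hright : U ∈ 𝓝[≥] s :=
    hg.1 s hs.1 (mem_of_superset (Metric.ball_mem_nhds _ one_pos) subset_union_left)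
  have hU : U ∈ 𝓝[Icc 0 t] s := by
    rcases hs.1.eq_or_lt with rfl | hpos
    · exact nhdsWithin_mono _ Icc_subset_Ici_self hright
    · have hleft : U ∈ 𝓝[<] s :=
        hg.2 s hpos (mem_of_superset (Metric.ball_mem_nhds _ one_pos) subset_union_right)
      exact mem_nhdsWithin_of_mem_nhds (nhdsLT_sup_nhdsGE s ▸ ⟨hleft, hright⟩)
  exact ⟨U, hU, (Metric.isBounded_ball.union Metric.isBounded_ball).subset
    (image_preimage_subset _ _)⟩

theorem exists_abs_le_Icc (hg : Cadlag g) (t : ℝ) : ∃ M, ∀ s ∈ Icc 0 t, |g s| ≤ M := by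
  obtain ⟨M, hM⟩ := isBounded_iff_forall_norm_le.1 (hg.isBounded_image_Icc t)
  exact ⟨M, fun s hs => hM _ (mem_image_of_mem g hs)⟩

theorem abs_leftLim_le (hg : Cadlag g) {t M s : ℝ} (hM : ∀ r ∈ Icc 0 t, |g r| ≤ M)
    (hs : s ∈ Ioc 0 t) : |leftLim g s| ≤ M :=
  abs_le_of_tendsto_nhdsLT hs.1 (hg.2 s hs.1) fun r hr => hM r ⟨hr.1.le, hr.2.le.trans hs.2⟩

theorem abs_leftLim_sub_leftLim_le {h : ℝ → ℝ} (hg : Cadlag g) (hh : Cadlag h) {ε s : ℝ}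
    (hgh : ∀ r, 0 ≤ r → |g r - h r| ≤ ε) (hs : 0 < s) : |leftLim g s - leftLim h s| ≤ ε :=
  abs_le_of_tendsto_nhdsLT hs ((hg.2 s hs).sub (hh.2 s hs)) fun r hr => hgh r hr.1.le

variable {x : ℝ → ℝ} {F f f' : ℝ → ℝ} {t c : ℝ}

theorem abs_firstOrderRemainder_jump_le (hg : Cadlag g) (hf : ∀ y, HasDerivAt f (f' y) y)
    (hF : ∀ y, HasDerivAt F (f y) y) {M R : ℝ} (hM : ∀ z ∈ Icc (-R) R, |f' z| ≤ M)
    (hR : ∀ r ∈ Icc 0 t, |g r| ≤ R) (hjump : ∀ s, 0 < s → |jmp g s| ≤ c * |jmp x s|)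
    {s : ℝ} (hs : s ∈ Ioc 0 t) :
    |firstOrderRemainder F f (leftLim g s) (g s)| ≤ M * c ^ 2 * jmp x s ^ 2 :=
  abs_firstOrderRemainder_le_of_abs_le hf hF hM (hg.abs_leftLim_le hR hs)
    (hR s (Ioc_subset_Icc_self hs)) (hjump s hs.1)

theorem summable_abs_firstOrderRemainder_jump (hg : Cadlag g)
    (hf : ∀ y, HasDerivAt f (f' y) y) (hf' : Continuous f') (hF : ∀ y, HasDerivAt F (f y) y)
    (hjump : ∀ s, 0 < s → |jmp g s| ≤ c * |jmp x s|)
    (hsum : Summable fun s : Ioc (0:ℝ) t => jmp x s ^ 2) :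
    Summable fun s : Ioc (0:ℝ) t => |firstOrderRemainder F f (leftLim g s) (g s)| := by
  obtain ⟨R, hR⟩ := hg.exists_abs_le_Icc t
  obtain ⟨M, hM⟩ := (isCompact_Icc (a := -R) (b := R)).exists_bound_of_continuousOn
    hf'.continuousOn
  exact (hsum.mul_left (M * c ^ 2)).of_nonneg_of_le (fun _ => abs_nonneg _)
    fun s => hg.abs_firstOrderRemainder_jump_le hf hF hM hR hjump s.2

end Cadlag

theorem statement9_general (t : ℝ) (x : ℝ → ℝ) (hx : Cadlag x)
    (hsum : Summable fun s : Ioc (0:ℝ) t => jmp x (s : ℝ) ^ 2)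
    (xe : ℝ → ℝ → ℝ) (hcad : ∀ ε : ℝ, 0 < ε → Cadlag (xe ε))
    (happ : ∀ ε : ℝ, 0 < ε → ∀ s : ℝ, 0 ≤ s → |x s - xe ε s| ≤ ε)
    (K : ℝ) (hjump : ∀ ε : ℝ, 0 < ε → ∀ s : ℝ, 0 < s → |jmp (xe ε) s| ≤ K * |jmp x s|)
    (f f' F : ℝ → ℝ) (hf : ∀ y, HasDerivAt f (f' y) y) (hf' : Continuous f')
    (hF : ∀ y, HasDerivAt F (f y) y) :
    (∀ ε : ℝ, 0 < ε → Summable fun s : Ioc (0:ℝ) t =>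
        |F (xe ε (s : ℝ)) - F (Function.leftLim (xe ε) (s : ℝ)) -
          f (xe ε (s : ℝ)) * jmp (xe ε) (s : ℝ)|) ∧
    (Summable fun s : Ioc (0:ℝ) t =>
        |F (x (s : ℝ)) - F (Function.leftLim x (s : ℝ)) - f (x (s : ℝ)) * jmp x (s : ℝ)|) ∧
    Tendsto (fun ε => ∑' s : Ioc (0:ℝ) t,
        (F (xe ε (s : ℝ)) - F (Function.leftLim (xe ε) (s : ℝ)) -
          f (xe ε (s : ℝ)) * jmp (xe ε) (s : ℝ)))
      (𝓝[>] (0:ℝ))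
      (𝓝 (∑' s : Ioc (0:ℝ) t,
        (F (x (s : ℝ)) - F (Function.leftLim x (s : ℝ)) -
          f (x (s : ℝ)) * jmp x (s : ℝ)))) := by
  have hFc : Continuous F := Differentiable.continuous fun y => (hF y).differentiableAt
  have hfc : Continuous f := Differentiable.continuous fun y => (hf y).differentiableAt
  refine ⟨fun ε hε => (hcad ε hε).summable_abs_firstOrderRemainder_jump hf hf' hF
      (hjump ε hε) hsum,
    hx.summable_abs_firstOrderRemainder_jump hf hf' hF (c := 1) (fun s _ => (one_mul _).ge)
      hsum, ?_⟩
  obtain ⟨M₀, hM₀⟩ := hx.exists_abs_le_Icc t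
  obtain ⟨M, hM⟩ := (isCompact_Icc (a := -(M₀ + 1)) (b := M₀ + 1)).exists_bound_of_continuousOn
    hf'.continuousOn
  have hxe_le : ∀ ε ∈ Ioc (0:ℝ) 1, ∀ r ∈ Icc 0 t, |xe ε r| ≤ M₀ + 1 := fun ε hε r hr => by
    linarith [happ ε hε.1 r hr.1, hM₀ r hr, abs_sub_abs_le_abs_sub (xe ε r) (x r),
      abs_sub_comm (xe ε r) (x r), hε.2]
  refine tendsto_tsum_of_dominated_convergence (hsum.mul_left (M * K ^ 2)) (fun s => ?_) ?_
  · have hval := tendsto_nhdsGT_zero_of_abs_sub_le fun ε hε => happ ε hε s s.2.1.le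
    have hlim := tendsto_nhdsGT_zero_of_abs_sub_le fun ε hε =>
      hx.abs_leftLim_sub_leftLim_le (hcad ε hε) (happ ε hε) s.2.1
    exact ((continuous_firstOrderRemainder hFc hfc).tendsto _).comp (hlim.prodMk_nhds hval)
  · filter_upwards [Ioc_mem_nhdsGT one_pos] with ε hε s
    exact (hcad ε hε.1).abs_firstOrderRemainder_jump_le hf hF hM (hxe_le ε hε)
      (hjump ε hε.1) s.2

/-- convergence of the compensator jump sums (right-endpoint version). -/
theorem statement9 (t : ℝ) (ht : 0 < t) (x : ℝ → ℝ) (hx : Cadlag x)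
    (hsum : Summable fun s : Ioc (0:ℝ) t => jmp x (s : ℝ) ^ 2)
    (xe : ℝ → ℝ → ℝ) (hcad : ∀ ε : ℝ, 0 < ε → Cadlag (xe ε))
    (happ : ∀ ε : ℝ, 0 < ε → ∀ s : ℝ, 0 ≤ s → |x s - xe ε s| ≤ ε)
    (K : ℝ) (hjump : ∀ ε : ℝ, 0 < ε → ∀ s : ℝ, 0 < s → |jmp (xe ε) s| ≤ K * |jmp x s|)
    (f f' F : ℝ → ℝ) (hf : ∀ y, HasDerivAt f (f' y) y) (hf' : Continuous f')
    (hF : ∀ y, HasDerivAt F (f y) y) :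
    (∀ ε : ℝ, 0 < ε → Summable fun s : Ioc (0:ℝ) t =>
        |F (xe ε (s : ℝ)) - F (Function.leftLim (xe ε) (s : ℝ)) -
          f (xe ε (s : ℝ)) * jmp (xe ε) (s : ℝ)|) ∧
    (Summable fun s : Ioc (0:ℝ) t =>
        |F (x (s : ℝ)) - F (Function.leftLim x (s : ℝ)) - f (x (s : ℝ)) * jmp x (s : ℝ)|) ∧
    Tendsto (fun ε => ∑' s : Ioc (0:ℝ) t,
        (F (xe ε (s : ℝ)) - F (Function.leftLim (xe ε) (s : ℝ)) -
          f (xe ε (s : ℝ)) * jmp (xe ε) (s : ℝ)))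
      (𝓝[>] (0:ℝ))
      (𝓝 (∑' s : Ioc (0:ℝ) t,
        (F (x (s : ℝ)) - F (Function.leftLim x (s : ℝ)) -
          f (x (s : ℝ)) * jmp x (s : ℝ)))) :=
  statement9_general t x hx hsum xe hcad happ K hjump f f' F hf hf' hF
end
end

section
/- Let x: [0,∞) → ℝ be càdlàg with Σ_{0<s≤t} (Δx_s)² < ∞ for a fixed t > 0, let (x^ε)_{ε>0} be càdlàg paths with sup_{s≥0} |x_s − x^ε_s| ≤ ε and |Δx^ε_s| ≤ K |Δx_s| for all s > 0 and ε > 0 and some constant K, and let f: ℝ → ℝ be continuously differentiable. Then Σ_{0<s≤t} (f(x_s) − f(x_{s−})) Δx^ε_s → Σ_{0<s≤t} (f(x_s) − f(x_{s−})) Δx_s as ε → 0+, both sums converging absolutely. -/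
open MeasureTheory Filter Topology Set
open scoped Classical

noncomputable section

/-!
A càdlàg path is bounded on `[0, t]`, so `f` is Lipschitz (constant `L`) on a ball containing
every `x s` and `x (s-)`. Hence each term `(f (x s) - f (x (s-))) Δxᵉ_s` is bounded by
`L K (Δx_s)²`, a summable majorant independent of `ε`. Uniform `ε`-closeness gives
`|Δxᵉ_s - Δx_s| ≤ 2ε`, and dominated convergence for sums finishes the proof.
-/

open Bornology

section SquareSummableJumps

variable {ι : Type*} {g a b : ι → ℝ} {L K : ℝ}

lemma abs_mul_le_mul_sq_of_abs_le {g a b L K : ℝ} (hg : |g| ≤ L * |a|) (hb : |b| ≤ K * |a|) :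
    |g * b| ≤ L * K * a ^ 2 :=
  calc |g * b| = |g| * |b| := abs_mul g b
    _ ≤ L * |a| * (K * |a|) := mul_le_mul hg hb (abs_nonneg b) ((abs_nonneg g).trans hg)
    _ = L * K * a ^ 2 := by rw [mul_mul_mul_comm, abs_mul_abs_self, sq]

lemma summable_abs_mul_of_abs_le (hsum : Summable fun i => a i ^ 2)
    (hg : ∀ i, |g i| ≤ L * |a i|) (hb : ∀ i, |b i| ≤ K * |a i|) :
    Summable fun i => |g i * b i| :=
  (hsum.mul_left (L * K)).of_nonneg_of_le (fun _ => abs_nonneg _)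
    fun i => abs_mul_le_mul_sq_of_abs_le (hg i) (hb i)

lemma tendsto_tsum_mul_of_abs_le {α : Type*} {l : Filter α} {b : α → ι → ℝ}
    (hsum : Summable fun i => a i ^ 2) (hg : ∀ i, |g i| ≤ L * |a i|)
    (hb : ∀ᶠ e in l, ∀ i, |b e i| ≤ K * |a i|) (hlim : ∀ i, Tendsto (b · i) l (𝓝 (a i))) :
    Tendsto (fun e => ∑' i, g i * b e i) l (𝓝 (∑' i, g i * a i)) :=
  tendsto_tsum_of_dominated_convergence (hsum.mul_left (L * K))
    (fun i => (hlim i).const_mul (g i))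
    (hb.mono fun _ hbe i => abs_mul_le_mul_sq_of_abs_le (hg i) (hbe i))

end SquareSummableJumps

namespace Cadlag

variable {x y : ℝ → ℝ}

lemma exists_mem_nhdsWithin_isBounded_image (hx : Cadlag x) {u : ℝ} (hu : 0 ≤ u) :
    ∃ v ∈ 𝓝[Ici 0] u, IsBounded (x '' v) := by
  obtain ⟨v₁, hv₁, hb₁⟩ := Metric.exists_isBounded_image_of_tendsto (hx.1 u hu)
  rcases hu.eq_or_lt with rfl | hu
  · exact ⟨v₁, hv₁, hb₁⟩
  obtain ⟨v₂, hv₂, hb₂⟩ := Metric.exists_isBounded_image_of_tendsto (hx.2 u hu)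
  refine ⟨v₂ ∪ v₁, nhdsWithin_le_nhds ?_, by rw [image_union]; exact hb₂.union hb₁⟩
  rw [← nhdsLT_sup_nhdsGE]
  exact union_mem_sup hv₂ hv₁

lemma isBounded_image_Icc_s11 (hx : Cadlag x) (t : ℝ) : IsBounded (x '' Icc 0 t) := by
  refine isCompact_Icc.induction_on (p := fun s => IsBounded (x '' s)) (by simp)
    (fun s s' hss' h => h.subset (image_mono hss'))
    (fun s s' h h' => by rw [image_union]; exact h.union h') fun u hu => ?_
  obtain ⟨v, hv, hb⟩ := hx.exists_mem_nhdsWithin_isBounded_image hu.1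
  exact ⟨v, nhdsWithin_mono u Icc_subset_Ici_self hv, hb⟩

lemma leftLim_mem_of_mapsTo (hx : Cadlag x) {s : ℝ} (hs : 0 < s) {C : Set ℝ} (hC : IsClosed C)
    (hxC : MapsTo x (Ioo 0 s) C) : Function.leftLim x s ∈ C :=
  hC.mem_of_tendsto (hx.2 s hs) (mem_of_superset (Ioo_mem_nhdsLT hs) hxC)

lemma exists_abs_map_sub_map_leftLim_le (hx : Cadlag x) {f : ℝ → ℝ} (hf : LocallyLipschitz f)
    (t : ℝ) : ∃ L : ℝ, ∀ s ∈ Ioc 0 t, |f (x s) - f (Function.leftLim x s)| ≤ L * |jmp x s| := by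
  obtain ⟨M, hM⟩ := (hx.isBounded_image_Icc_s11 t).subset_closedBall 0
  obtain ⟨L, hL⟩ :=
    hf.locallyLipschitzOn.exists_lipschitzOnWith_of_compact (isCompact_closedBall (0 : ℝ) M)
  refine ⟨L, fun s hs => ?_⟩
  have hxs : x s ∈ Metric.closedBall 0 M := hM ⟨s, Ioc_subset_Icc_self hs, rfl⟩
  have hxs' : Function.leftLim x s ∈ Metric.closedBall 0 M :=
    hx.leftLim_mem_of_mapsTo hs.1 Metric.isClosed_closedBall fun r hr =>
      hM ⟨r, ⟨hr.1.le, hr.2.le.trans hs.2⟩, rfl⟩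
  simpa only [Real.dist_eq, jmp] using hL.dist_le_mul _ hxs _ hxs'

lemma abs_jmp_sub_jmp_le (hx : Cadlag x) (hy : Cadlag y) {ε : ℝ}
    (hxy : ∀ r, 0 ≤ r → |x r - y r| ≤ ε) {s : ℝ} (hs : 0 < s) :
    |jmp y s - jmp x s| ≤ 2 * ε := by
  have hleft : |Function.leftLim x s - Function.leftLim y s| ≤ ε :=
    le_of_tendsto ((hx.2 s hs).sub (hy.2 s hs)).abs <|
      mem_of_superset (Ioo_mem_nhdsLT hs) fun r hr => hxy r hr.1.le
  have hright := hxy s hs.le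
  rw [abs_le] at hleft hright ⊢
  unfold jmp
  constructor <;> linarith

lemma tendsto_jmp_of_abs_sub_le (hx : Cadlag x) {xe : ℝ → ℝ → ℝ}
    (hxe : ∀ ε, 0 < ε → Cadlag (xe ε)) (happ : ∀ ε, 0 < ε → ∀ r, 0 ≤ r → |x r - xe ε r| ≤ ε)
    {s : ℝ} (hs : 0 < s) : Tendsto (fun ε => jmp (xe ε) s) (𝓝[>] 0) (𝓝 (jmp x s)) := by
  refine tendsto_iff_dist_tendsto_zero.2 <| squeeze_zero' (.of_forall fun _ => dist_nonneg)
    (eventually_mem_nhdsWithin.mono fun ε hε =>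
      (hx.abs_jmp_sub_jmp_le (hxe ε hε) (happ ε hε) hs).trans_eq' (Real.dist_eq _ _)) ?_
  simpa using (tendsto_id.const_mul (2 : ℝ)).mono_left (nhdsWithin_le_nhds (a := 0))

end Cadlag

theorem statement11_general (t : ℝ) (x : ℝ → ℝ) (hx : Cadlag x)
    (hsum : Summable fun s : Ioc (0:ℝ) t => jmp x (s : ℝ) ^ 2)
    (xe : ℝ → ℝ → ℝ) (hcad : ∀ ε : ℝ, 0 < ε → Cadlag (xe ε))
    (happ : ∀ ε : ℝ, 0 < ε → ∀ s : ℝ, 0 ≤ s → |x s - xe ε s| ≤ ε)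
    (K : ℝ) (hjump : ∀ ε : ℝ, 0 < ε → ∀ s : ℝ, 0 < s → |jmp (xe ε) s| ≤ K * |jmp x s|)
    (f f' : ℝ → ℝ) (hf : ∀ y, HasDerivAt f (f' y) y) (hf' : Continuous f') :
    (∀ ε : ℝ, 0 < ε → Summable fun s : Ioc (0:ℝ) t =>
        |(f (x (s : ℝ)) - f (Function.leftLim x (s : ℝ))) * jmp (xe ε) (s : ℝ)|) ∧
    (Summable fun s : Ioc (0:ℝ) t =>
        |(f (x (s : ℝ)) - f (Function.leftLim x (s : ℝ))) * jmp x (s : ℝ)|) ∧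
    Tendsto (fun ε => ∑' s : Ioc (0:ℝ) t,
        (f (x (s : ℝ)) - f (Function.leftLim x (s : ℝ))) * jmp (xe ε) (s : ℝ))
      (𝓝[>] (0:ℝ))
      (𝓝 (∑' s : Ioc (0:ℝ) t,
        (f (x (s : ℝ)) - f (Function.leftLim x (s : ℝ))) * jmp x (s : ℝ))) := by
  have hC1 : ContDiff ℝ 1 f := contDiff_one_iff_deriv.2
    ⟨fun y => (hf y).differentiableAt, by rwa [funext fun y => (hf y).deriv]⟩
  obtain ⟨L, hL⟩ := hx.exists_abs_map_sub_map_leftLim_le hC1.locallyLipschitz t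
  have hg (s : Ioc (0:ℝ) t) := hL s s.2
  have hb (ε : ℝ) (hε : 0 < ε) (s : Ioc (0:ℝ) t) := hjump ε hε s s.2.1
  refine ⟨fun ε hε => summable_abs_mul_of_abs_le hsum hg (hb ε hε),
    summable_abs_mul_of_abs_le (K := 1) hsum hg fun s => (one_mul _).ge,
    tendsto_tsum_mul_of_abs_le hsum hg (eventually_mem_nhdsWithin.mono hb)
      fun s => hx.tendsto_jmp_of_abs_sub_le hcad happ s.2.1⟩

/-- `Σ_{0<s≤t} Δ(f∘x)_s Δxᵉ_s → Σ_{0<s≤t} Δ(f∘x)_s Δx_s` as `ε → 0+`,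
all sums converging absolutely. -/
theorem statement11 (t : ℝ) (ht : 0 < t) (x : ℝ → ℝ) (hx : Cadlag x)
    (hsum : Summable fun s : Ioc (0:ℝ) t => jmp x (s : ℝ) ^ 2)
    (xe : ℝ → ℝ → ℝ) (hcad : ∀ ε : ℝ, 0 < ε → Cadlag (xe ε))
    (happ : ∀ ε : ℝ, 0 < ε → ∀ s : ℝ, 0 ≤ s → |x s - xe ε s| ≤ ε)
    (K : ℝ) (hjump : ∀ ε : ℝ, 0 < ε → ∀ s : ℝ, 0 < s → |jmp (xe ε) s| ≤ K * |jmp x s|)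
    (f f' : ℝ → ℝ) (hf : ∀ y, HasDerivAt f (f' y) y) (hf' : Continuous f') :
    (∀ ε : ℝ, 0 < ε → Summable fun s : Ioc (0:ℝ) t =>
        |(f (x (s : ℝ)) - f (Function.leftLim x (s : ℝ))) * jmp (xe ε) (s : ℝ)|) ∧
    (Summable fun s : Ioc (0:ℝ) t =>
        |(f (x (s : ℝ)) - f (Function.leftLim x (s : ℝ))) * jmp x (s : ℝ)|) ∧
    Tendsto (fun ε => ∑' s : Ioc (0:ℝ) t,
        (f (x (s : ℝ)) - f (Function.leftLim x (s : ℝ))) * jmp (xe ε) (s : ℝ))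
      (𝓝[>] (0:ℝ))
      (𝓝 (∑' s : Ioc (0:ℝ) t,
        (f (x (s : ℝ)) - f (Function.leftLim x (s : ℝ))) * jmp x (s : ℝ))) :=
  statement11_general t x hx hsum xe hcad happ K hjump f f' hf hf'
end
end

section
/- Fix T > 0. Let x: [0,∞) → ℝ be càdlàg, and for ε > 0 let x^ε be a càdlàg path with |x_s − x^ε_s| ≤ ε for every s ≥ 0 and |Δx^ε_s| ≤ |Δx_s| for every s > 0. Then sup_{0≤t≤T} Σ_{0<s≤t} | (Δx_s − Δx^ε_s) Δx^ε_s | ≤ Σ_{0<s≤T} min { 2ε |Δx_s|, 2 |Δx_s|² }; in particular, if Σ_{0<s≤T} (Δx_s)² < ∞, then this bound tends to 0 as ε → 0+. -/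
open MeasureTheory Filter Topology Set
open scoped Classical

noncomputable section

theorem abs_leftLim_sub_leftLim_le {f g : ℝ → ℝ} {s ε : ℝ}
    (hf : Tendsto f (𝓝[<] s) (𝓝 (Function.leftLim f s)))
    (hg : Tendsto g (𝓝[<] s) (𝓝 (Function.leftLim g s)))
    (h : ∀ᶠ r in 𝓝[<] s, |f r - g r| ≤ ε) :
    |Function.leftLim f s - Function.leftLim g s| ≤ ε :=
  le_of_tendsto (hf.sub hg).abs h

theorem abs_jmp_sub_jmp_le {f g : ℝ → ℝ} {s ε : ℝ} (hf : Cadlag f) (hg : Cadlag g) (hs : 0 < s)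
    (h : ∀ r, 0 ≤ r → |f r - g r| ≤ ε) :
    |jmp f s - jmp g s| ≤ 2 * ε := by
  have hleft : |Function.leftLim f s - Function.leftLim g s| ≤ ε := by
    refine abs_leftLim_sub_leftLim_le (hf.2 s hs) (hg.2 s hs) ?_
    filter_upwards [Ioo_mem_nhdsLT hs] with r hr using h r hr.1.le
  calc |jmp f s - jmp g s|
      = |(f s - g s) - (Function.leftLim f s - Function.leftLim g s)| := by
        unfold jmp; congr 1; ring
    _ ≤ |f s - g s| + |Function.leftLim f s - Function.leftLim g s| := abs_sub _ _
    _ ≤ 2 * ε := by linarith [h s hs.le]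

theorem abs_sub_mul_le_min {a b δ : ℝ} (h : |a - b| ≤ δ) (hb : |b| ≤ |a|) :
    |(a - b) * b| ≤ min (δ * |a|) (2 * |a| ^ 2) := by
  have hab : |a - b| ≤ 2 * |a| := by linarith [abs_sub a b]
  rw [abs_mul]
  refine le_min ?_ ?_
  · exact mul_le_mul h hb (abs_nonneg _) ((abs_nonneg _).trans h)
  · nlinarith [abs_nonneg (a - b), abs_nonneg b]

theorem tendsto_tsum_ofReal_min_mul_abs_sq {ι : Type*} (a : ι → ℝ)
    (hsum : Summable fun s => a s ^ 2) :
    Tendsto (fun ε => ∑' s, ENNReal.ofReal (min (2 * ε * |a s|) (2 * |a s| ^ 2)))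
      (𝓝[>] (0:ℝ)) (𝓝 0) := by
  have hbound : Summable fun s => 2 * |a s| ^ 2 := by simpa only [sq_abs] using hsum.mul_left 2
  have hlim (s : ι) : Tendsto (fun ε : ℝ => min (2 * ε * |a s|) (2 * |a s| ^ 2))
      (𝓝[>] 0) (𝓝 0) := by
    have hcont : Continuous fun ε : ℝ => min (2 * ε * |a s|) (2 * |a s| ^ 2) := by fun_prop
    have := (hcont.tendsto 0).mono_left (nhdsWithin_le_nhds (s := Ioi 0))
    rwa [mul_zero, zero_mul, min_eq_left (by positivity)] at this
  have hreal : Tendsto (fun ε => ∑' s, min (2 * ε * |a s|) (2 * |a s| ^ 2))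
      (𝓝[>] (0:ℝ)) (𝓝 0) := by
    simpa using tendsto_tsum_of_dominated_convergence hbound hlim
      (eventually_nhdsWithin_of_forall fun ε (hε : 0 < ε) s => by
        rw [Real.norm_of_nonneg (by positivity)]
        exact min_le_right _ _)
  rw [← ENNReal.ofReal_zero]
  refine ((ENNReal.continuous_ofReal.tendsto 0).comp hreal).congr' ?_
  filter_upwards [self_mem_nhdsWithin] with ε (hε : 0 < ε)
  exact ENNReal.ofReal_tsum_of_nonneg (f := fun s => min (2 * ε * |a s|) (2 * |a s| ^ 2))
    (fun s => by positivity)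
    (hbound.of_nonneg_of_le (fun s => by positivity) fun s => min_le_right _ _)

theorem statement13_general (T : ℝ) (x : ℝ → ℝ) (hx : Cadlag x)
    (xe : ℝ → ℝ → ℝ) (hcad : ∀ ε : ℝ, 0 < ε → Cadlag (xe ε))
    (happ : ∀ ε : ℝ, 0 < ε → ∀ s : ℝ, 0 ≤ s → |x s - xe ε s| ≤ ε)
    (hjump : ∀ ε : ℝ, 0 < ε → ∀ s : ℝ, 0 < s → |jmp (xe ε) s| ≤ |jmp x s|) :
    (∀ ε : ℝ, 0 < ε →
      (⨆ t : Icc (0:ℝ) T, ∑' s : Ioc (0:ℝ) (t : ℝ),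
          ENNReal.ofReal |(jmp x (s : ℝ) - jmp (xe ε) (s : ℝ)) * jmp (xe ε) (s : ℝ)|) ≤
        ∑' s : Ioc (0:ℝ) T,
          ENNReal.ofReal (min (2 * ε * |jmp x (s : ℝ)|) (2 * |jmp x (s : ℝ)| ^ 2))) ∧
    ((Summable fun s : Ioc (0:ℝ) T => jmp x (s : ℝ) ^ 2) →
      Tendsto (fun ε => ∑' s : Ioc (0:ℝ) T,
          ENNReal.ofReal (min (2 * ε * |jmp x (s : ℝ)|) (2 * |jmp x (s : ℝ)| ^ 2)))
        (𝓝[>] (0:ℝ)) (𝓝 (0 : ENNReal))) := by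
  refine ⟨fun ε hε => iSup_le fun t => ?_, tendsto_tsum_ofReal_min_mul_abs_sq _⟩
  calc ∑' s : Ioc (0:ℝ) t, ENNReal.ofReal |(jmp x s - jmp (xe ε) s) * jmp (xe ε) s|
      ≤ ∑' s : Ioc (0:ℝ) T, ENNReal.ofReal |(jmp x s - jmp (xe ε) s) * jmp (xe ε) s| :=
        ENNReal.tsum_mono_subtype
          (fun s => ENNReal.ofReal |(jmp x s - jmp (xe ε) s) * jmp (xe ε) s|)
          (Ioc_subset_Ioc_right t.2.2)
    _ ≤ _ := ENNReal.tsum_le_tsum fun s => ENNReal.ofReal_le_ofReal <|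
        abs_sub_mul_le_min (abs_jmp_sub_jmp_le hx (hcad ε hε) s.2.1 (happ ε hε))
          (hjump ε hε s s.2.1)

/-- `sup_{0≤t≤T} Σ_{0<s≤t} |(Δx_s - Δxᵉ_s) Δxᵉ_s| ≤ Σ_{0<s≤T} min(2ε|Δx_s|, 2|Δx_s|²)`,
and if `Σ_{0<s≤T} (Δx_s)² < ∞` then the bound tends to `0` as `ε → 0+`. -/
theorem statement13 (T : ℝ) (hT : 0 < T) (x : ℝ → ℝ) (hx : Cadlag x)
    (xe : ℝ → ℝ → ℝ) (hcad : ∀ ε : ℝ, 0 < ε → Cadlag (xe ε))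
    (happ : ∀ ε : ℝ, 0 < ε → ∀ s : ℝ, 0 ≤ s → |x s - xe ε s| ≤ ε)
    (hjump : ∀ ε : ℝ, 0 < ε → ∀ s : ℝ, 0 < s → |jmp (xe ε) s| ≤ |jmp x s|) :
    (∀ ε : ℝ, 0 < ε →
      (⨆ t : Icc (0:ℝ) T, ∑' s : Ioc (0:ℝ) (t : ℝ),
          ENNReal.ofReal |(jmp x (s : ℝ) - jmp (xe ε) (s : ℝ)) * jmp (xe ε) (s : ℝ)|) ≤
        ∑' s : Ioc (0:ℝ) T,
          ENNReal.ofReal (min (2 * ε * |jmp x (s : ℝ)|) (2 * |jmp x (s : ℝ)| ^ 2))) ∧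
    ((Summable fun s : Ioc (0:ℝ) T => jmp x (s : ℝ) ^ 2) →
      Tendsto (fun ε => ∑' s : Ioc (0:ℝ) T,
          ENNReal.ofReal (min (2 * ε * |jmp x (s : ℝ)|) (2 * |jmp x (s : ℝ)| ^ 2)))
        (𝓝[>] (0:ℝ)) (𝓝 (0 : ENNReal))) :=
  statement13_general T x hx xe hcad happ hjump
end
end

section
/- Let x: [0,∞) → ℝ be càdlàg, t ≥ 0, and 0 < ε < 1. Then ( ⌊1/ε⌋ / (⌊1/ε⌋ + 1) ) · (1/⌊1/ε⌋) · TTV(x,[0,t],1/⌊1/ε⌋) ≤ ε · TTV(x,[0,t],ε) ≤ ( ⌈1/ε⌉ / (⌈1/ε⌉ − 1) ) · (1/⌈1/ε⌉) · TTV(x,[0,t],1/⌈1/ε⌉), where ⌊·⌋ and ⌈·⌉ denote the floor and ceiling functions. -/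
open MeasureTheory Filter Topology Set
open scoped Classical

noncomputable section

/-! The two coefficients equal `1/(⌊1/ε⌋+1)` and `1/(⌈1/ε⌉-1)`, so with
`1/(⌊1/ε⌋+1) ≤ ε ≤ 1/⌊1/ε⌋` and `1/⌈1/ε⌉ ≤ ε ≤ 1/(⌈1/ε⌉-1)` both bounds reduce to the
monotonicity of `ε ↦ TTV(x,[0,t],ε)`. Since `TTV` is a supremum, this needs the partition sums
to be bounded above. For càdlàg `x` and `δ > 0`, continuous induction along `[0,∞)` gives a
finite set `D` such that every increment over an interval `(u,v]` missing `D` is smaller than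
`δ`. Hence in a partition sum at most `#D` summands are positive, and each is at most
`2 sup_{[0,t]} |x|`. -/

theorem Antitone.real_induction {P : ℝ → Prop} (hP : Antitone P) {a : ℝ} (ha : P a)
    (hleft : ∀ c, a < c → (∀ b < c, P b) → P c) (hright : ∀ c, a ≤ c → P c → ∃ b > c, P b)
    (t : ℝ) : P t := by
  by_contra ht
  have hbdd : BddAbove {b | P b} := ⟨t, fun b hb => not_lt.1 fun htb => ht (hP htb.le hb)⟩
  have hac : a ≤ sSup {b | P b} := le_csSup hbdd ha
  have hsup : P (sSup {b | P b}) := by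
    rcases hac.eq_or_lt with hac | hac
    · exact hac ▸ ha
    · refine hleft _ hac fun b hb => ?_
      obtain ⟨b', hb', hbb'⟩ := exists_lt_of_lt_csSup ⟨a, ha⟩ hb
      exact hP hbb'.le hb'
  obtain ⟨b, hb, hPb⟩ := hright _ hac hsup
  exact (le_csSup hbdd hPb).not_gt hb

def SmallIncrementsOff (x : ℝ → ℝ) (δ a : ℝ) (D : Finset ℝ) : Prop :=
  ∀ u v, 0 ≤ u → u < v → v ≤ a → (∀ d ∈ D, d ∉ Ioc u v) → |x v - x u| < δ

open Finset

namespace SmallIncrementsOff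

variable {x : ℝ → ℝ} {δ a : ℝ} {D : Finset ℝ}

lemma zero_empty : SmallIncrementsOff x δ 0 ∅ :=
  fun _ _ hu huv hv _ => (hv.not_gt (hu.trans_lt huv)).elim

lemma mono (hD : SmallIncrementsOff x δ a D) {b : ℝ} (hba : b ≤ a) :
    SmallIncrementsOff x δ b D :=
  fun u v hu huv hv => hD u v hu huv (hv.trans hba)

lemma exists_of_tendsto_nhdsLT (hδ : 0 < δ) {c L : ℝ} (hc : 0 < c)
    (hL : Tendsto x (𝓝[<] c) (𝓝 L)) (h : ∀ b < c, ∃ D, SmallIncrementsOff x δ b D) :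
    ∃ D, SmallIncrementsOff x δ c D := by
  obtain ⟨l, hlc, hl⟩ :=
    mem_nhdsLT_iff_exists_Ioo_subset.1 (hL (Metric.ball_mem_nhds L (half_pos hδ)))
  have hlc : l < c := hlc
  set a := max ((l + c) / 2) 0
  have hla : l < a := (by linarith : l < (l + c) / 2).trans_le (le_max_left _ _)
  have hac : a < c := max_lt (by linarith) hc
  obtain ⟨D, hD⟩ := h a hac
  refine ⟨insert a (insert c D), fun u v hu huv hv_le hfree => ?_⟩
  by_cases hva : v ≤ a
  · exact hD u v hu huv hva fun d hd => hfree d (by simp [hd])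
  have hau : a ≤ u := not_lt.1 fun hua => hfree a (by simp) ⟨hua, not_le.1 hva |>.le⟩
  have hvc : v < c := hv_le.lt_of_ne fun hv => hfree c (by simp) ⟨hv ▸ huv, hv.ge⟩
  have hu : |x u - L| < δ / 2 := hl ⟨hla.trans_le hau, huv.trans hvc⟩
  have hv : |x v - L| < δ / 2 := hl ⟨hla.trans_le (hau.trans huv.le), hvc⟩
  rw [abs_lt] at hu hv ⊢
  constructor <;> linarith

lemma exists_gt_of_continuousWithinAt (hδ : 0 < δ) {c : ℝ}
    (hx : ContinuousWithinAt x (Ici c) c) (h : ∃ D, SmallIncrementsOff x δ c D) :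
    ∃ b > c, ∃ D, SmallIncrementsOff x δ b D := by
  obtain ⟨r, hcr, hr⟩ :=
    mem_nhdsGE_iff_exists_Ico_subset.1 (hx (Metric.ball_mem_nhds (x c) (half_pos hδ)))
  have hcr : c < r := hcr
  obtain ⟨D, hD⟩ := h
  refine ⟨(c + r) / 2, by linarith, insert c D, fun u v hu huv hvr hfree => ?_⟩
  by_cases hvc : v ≤ c
  · exact hD u v hu huv hvc fun d hd => hfree d (by simp [hd])
  have hcu : c ≤ u := not_lt.1 fun huc => hfree c (by simp) ⟨huc, not_le.1 hvc |>.le⟩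
  have hu : |x u - x c| < δ / 2 := hr ⟨hcu, by linarith⟩
  have hv : |x v - x c| < δ / 2 := hr ⟨hcu.trans huv.le, by linarith⟩
  rw [abs_lt] at hu hv ⊢
  constructor <;> linarith

lemma abs_le (hD : SmallIncrementsOff x δ a D) (hδ : 0 ≤ δ) {s : ℝ} (hs : s ∈ Icc 0 a) :
    |x s| ≤ ∑ d ∈ insert 0 D, |x d| + δ := by
  set E := (insert 0 D).filter (· ≤ s)
  have h0E : (0 : ℝ) ∈ E := mem_filter.2 ⟨mem_insert_self _ _, hs.1⟩
  set d := E.max' ⟨0, h0E⟩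
  obtain ⟨hdD, hds⟩ : d ∈ insert 0 D ∧ d ≤ s := mem_filter.1 (E.max'_mem ⟨0, h0E⟩)
  have hxd : |x d| ≤ ∑ e ∈ insert 0 D, |x e| :=
    single_le_sum (f := fun e => |x e|) (fun _ _ => abs_nonneg _) hdD
  rcases hds.eq_or_lt with hds | hds
  · rw [← hds]
    linarith
  have hfree : ∀ e ∈ D, e ∉ Ioc d s := fun e he hes =>
    hes.1.not_ge (E.le_max' e (mem_filter.2 ⟨mem_insert_of_mem he, hes.2⟩))
  have hsd := hD d s (E.le_max' 0 h0E) hds hs.2 hfree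
  have := abs_sub_abs_le_abs_sub (x s) (x d)
  linarith

lemma sum_le (hD : SmallIncrementsOff x δ a D) (hδ : 0 ≤ δ) {M : ℝ}
    (hM : ∀ s ∈ Icc 0 a, |x s| ≤ M) {n : ℕ} {τ : ℕ → ℝ} (h0 : 0 ≤ τ 0) (hn : τ n ≤ a)
    (hτ : ∀ i < n, τ i < τ (i + 1)) :
    ∑ i ∈ range n, max (|x (τ (i + 1)) - x (τ i)| - δ) 0 ≤ 2 * M * #D := by
  set g : ℕ → ℝ := fun i => τ (min i n)
  have hg : Monotone g := monotone_nat_of_le_succ fun i => by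
    rcases lt_or_ge i n with hi | hi
    · simpa [g, hi.le, Nat.succ_le_of_lt hi] using (hτ i hi).le
    · simp [g, hi, hi.trans (Nat.le_succ i)]
  have hτg : ∀ i ≤ n, τ i = g i := fun i hi => by simp [g, hi]
  have hmem : ∀ i ≤ n, τ i ∈ Icc 0 a := fun i hi =>
    ⟨h0.trans (by simpa [hτg i hi, g] using hg (Nat.zero_le i)),
      (by simpa [hτg i hi, g] using hg hi : τ i ≤ τ n).trans hn⟩
  have hM0 : 0 ≤ M := (abs_nonneg _).trans (hM _ (hmem 0 (Nat.zero_le n)))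
  set J : ℕ → Finset ℝ := fun i => D.filter (· ∈ Ioc (τ i) (τ (i + 1)))
  have hterm : ∀ i ∈ range n, max (|x (τ (i + 1)) - x (τ i)| - δ) 0 ≤ 2 * M * #(J i) := by
    intro i hi
    have hi : i < n := Finset.mem_range.1 hi
    rcases (J i).eq_empty_or_nonempty with hJ | hJ
    · have hfree : ∀ d ∈ D, d ∉ Ioc (τ i) (τ (i + 1)) := filter_eq_empty_iff.1 hJ
      have := hD _ _ (hmem i hi.le).1 (hτ i hi) (hmem (i + 1) hi).2 hfree
      simp only [hJ, Finset.card_empty, Nat.cast_zero, mul_zero]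
      exact max_le (by linarith) le_rfl
    · have h1 : (1 : ℝ) ≤ #(J i) := by exact_mod_cast hJ.card_pos
      have h2 := hM _ (hmem (i + 1) hi)
      have h3 := hM _ (hmem i hi.le)
      have h4 := abs_sub (x (τ (i + 1))) (x (τ i))
      calc max (|x (τ (i + 1)) - x (τ i)| - δ) 0 ≤ 2 * M * 1 :=
            max_le (by linarith) (by linarith)
        _ ≤ 2 * M * #(J i) := by gcongr
  have hdisj : (Finset.range n : Set ℕ).PairwiseDisjoint J := by
    intro i hi j hj hij
    have hIoc := hg.pairwise_disjoint_on_Ioc_succ hij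
    simp only [Function.onFun, Order.succ_eq_add_one] at hIoc
    rw [← hτg i (Finset.mem_range.1 hi).le, ← hτg (i + 1) (Finset.mem_range.1 hi),
      ← hτg j (Finset.mem_range.1 hj).le, ← hτg (j + 1) (Finset.mem_range.1 hj)] at hIoc
    exact disjoint_filter_filter' _ _ hIoc
  have hcard : ∑ i ∈ range n, #(J i) ≤ #D := by
    rw [← card_biUnion hdisj]
    exact card_le_card (biUnion_subset.2 fun i _ => filter_subset _ _)
  calc ∑ i ∈ range n, max (|x (τ (i + 1)) - x (τ i)| - δ) 0
      ≤ ∑ i ∈ range n, 2 * M * #(J i) := sum_le_sum hterm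
    _ = 2 * M * (∑ i ∈ range n, #(J i) : ℕ) := by rw [Nat.cast_sum, mul_sum]
    _ ≤ 2 * M * #D := by gcongr

end SmallIncrementsOff

lemma Cadlag.exists_smallIncrementsOff {x : ℝ → ℝ} (hx : Cadlag x) {δ : ℝ} (hδ : 0 < δ)
    (t : ℝ) : ∃ D, SmallIncrementsOff x δ t D :=
  Antitone.real_induction (P := fun a => ∃ D, SmallIncrementsOff x δ a D)
    (fun _ _ hab ⟨D, hD⟩ => ⟨D, hD.mono hab⟩) ⟨∅, SmallIncrementsOff.zero_empty⟩
    (fun c hc h => SmallIncrementsOff.exists_of_tendsto_nhdsLT hδ hc (hx.2 c hc) h)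
    (fun c hc h => SmallIncrementsOff.exists_gt_of_continuousWithinAt hδ (hx.1 c hc) h) t

/-- The partition sums whose supremum is `TTV x a b ε`. -/
def ttvSums (x : ℝ → ℝ) (a b ε : ℝ) : Set ℝ :=
  {v : ℝ | ∃ (n : ℕ) (t : ℕ → ℝ), a ≤ t 0 ∧ t n ≤ b ∧ (∀ i, i < n → t i < t (i + 1)) ∧
    v = ∑ i ∈ Finset.range n, max (|x (t (i + 1)) - x (t i)| - ε) 0}

lemma TTV_nonneg (x : ℝ → ℝ) (a b ε : ℝ) : 0 ≤ TTV x a b ε :=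
  Real.sSup_nonneg <| by
    rintro _ ⟨n, τ, -, -, -, rfl⟩
    exact sum_nonneg fun i _ => le_max_right _ _

lemma TTV_le_TTV_of_bddAbove {x : ℝ → ℝ} {a b δ₁ δ₂ : ℝ}
    (hbdd : BddAbove (ttvSums x a b δ₁)) (h : δ₁ ≤ δ₂) : TTV x a b δ₂ ≤ TTV x a b δ₁ := by
  refine Real.sSup_le ?_ (TTV_nonneg x a b δ₁)
  rintro _ ⟨n, τ, ha, hb, hτ, rfl⟩
  refine le_trans ?_ (le_csSup hbdd ⟨n, τ, ha, hb, hτ, rfl⟩)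
  exact sum_le_sum fun i _ => max_le_max (by linarith) le_rfl

lemma Cadlag.bddAbove_ttvSums {x : ℝ → ℝ} (hx : Cadlag x) {δ : ℝ} (hδ : 0 < δ) (t : ℝ) :
    BddAbove (ttvSums x 0 t δ) := by
  obtain ⟨D, hD⟩ := hx.exists_smallIncrementsOff hδ t
  refine ⟨2 * (∑ d ∈ insert 0 D, |x d| + δ) * #D, ?_⟩
  rintro _ ⟨n, τ, h0, hn, hτ, rfl⟩
  exact hD.sum_le hδ.le (fun s hs => hD.abs_le hδ.le hs) h0 hn hτ

lemma Cadlag.TTV_le_TTV {x : ℝ → ℝ} (hx : Cadlag x) (t : ℝ) {δ₁ δ₂ : ℝ} (hδ₁ : 0 < δ₁)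
    (h : δ₁ ≤ δ₂) : TTV x 0 t δ₂ ≤ TTV x 0 t δ₁ :=
  TTV_le_TTV_of_bddAbove (hx.bddAbove_ttvSums hδ₁ t) h

section FloorCeil

variable {ε : ℝ}

lemma one_div_floor_one_div_add_one_le (hε : 0 < ε) : 1 / ((⌊1 / ε⌋ : ℝ) + 1) ≤ ε := by
  have h := Int.lt_floor_add_one (1 / ε)
  rw [div_le_iff₀ (by positivity)]
  rw [div_lt_iff₀ hε] at h
  linarith

lemma one_le_floor_one_div (hε0 : 0 < ε) (hε1 : ε ≤ 1) : (1 : ℝ) ≤ ⌊1 / ε⌋ := by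
  exact_mod_cast Int.le_floor.2 (by simpa using one_le_one_div hε0 hε1)

lemma le_one_div_floor_one_div (hε0 : 0 < ε) (hε1 : ε ≤ 1) : ε ≤ 1 / (⌊1 / ε⌋ : ℝ) :=
  (le_one_div hε0 (by linarith [one_le_floor_one_div hε0 hε1])).2 (Int.floor_le _)

lemma one_div_ceil_one_div_le (hε : 0 < ε) : 1 / (⌈1 / ε⌉ : ℝ) ≤ ε :=
  (one_div_le (by positivity) hε).2 (Int.le_ceil _)

lemma one_lt_ceil_one_div (hε0 : 0 < ε) (hε1 : ε < 1) : (1 : ℝ) < ⌈1 / ε⌉ :=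
  (one_lt_one_div hε0 hε1).trans_le (Int.le_ceil _)

lemma le_one_div_ceil_one_div_sub_one (hε0 : 0 < ε) (hε1 : ε < 1) :
    ε ≤ 1 / ((⌈1 / ε⌉ : ℝ) - 1) := by
  have h := Int.ceil_lt_add_one (1 / ε)
  have h1 := one_lt_ceil_one_div hε0 hε1
  exact (le_one_div hε0 (by linarith)).2 (by linarith)

end FloorCeil

theorem statement14_general (x : ℝ → ℝ) (hx : Cadlag x) (t : ℝ)
    (ε : ℝ) (hε0 : 0 < ε) (hε1 : ε < 1) :
    ((⌊1 / ε⌋ : ℝ) / ((⌊1 / ε⌋ : ℝ) + 1)) * ((1 : ℝ) / (⌊1 / ε⌋ : ℝ)) *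
        TTV x 0 t (1 / (⌊1 / ε⌋ : ℝ)) ≤ ε * TTV x 0 t ε ∧
      ε * TTV x 0 t ε ≤
        ((⌈1 / ε⌉ : ℝ) / ((⌈1 / ε⌉ : ℝ) - 1)) * ((1 : ℝ) / (⌈1 / ε⌉ : ℝ)) *
          TTV x 0 t (1 / (⌈1 / ε⌉ : ℝ)) := by
  set n : ℝ := (⌊1 / ε⌋ : ℝ)
  set m : ℝ := (⌈1 / ε⌉ : ℝ)
  have hn : 1 ≤ n := one_le_floor_one_div hε0 hε1.le
  have hm : 1 < m := one_lt_ceil_one_div hε0 hε1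
  have hcoef_n : n / (n + 1) * (1 / n) = 1 / (n + 1) := by field_simp
  have hcoef_m : m / (m - 1) * (1 / m) = 1 / (m - 1) := by
    have : m - 1 ≠ 0 := by linarith
    field_simp
  rw [hcoef_n, hcoef_m]
  constructor
  · exact mul_le_mul (one_div_floor_one_div_add_one_le hε0)
      (hx.TTV_le_TTV t hε0 (le_one_div_floor_one_div hε0 hε1.le)) (TTV_nonneg _ _ _ _) hε0.le
  · exact mul_le_mul (le_one_div_ceil_one_div_sub_one hε0 hε1)
      (hx.TTV_le_TTV t (by positivity) (one_div_ceil_one_div_le hε0)) (TTV_nonneg _ _ _ _)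
      (by positivity)

/-- comparison of `ε · TTV(x,[0,t],ε)` with the values along the
sequences `1/⌊1/ε⌋` and `1/⌈1/ε⌉`. -/
theorem statement14 (x : ℝ → ℝ) (hx : Cadlag x) (t : ℝ) (ht : 0 ≤ t)
    (ε : ℝ) (hε0 : 0 < ε) (hε1 : ε < 1) :
    ((⌊1 / ε⌋ : ℝ) / ((⌊1 / ε⌋ : ℝ) + 1)) * ((1 : ℝ) / (⌊1 / ε⌋ : ℝ)) *
        TTV x 0 t (1 / (⌊1 / ε⌋ : ℝ)) ≤ ε * TTV x 0 t ε ∧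
      ε * TTV x 0 t ε ≤
        ((⌈1 / ε⌉ : ℝ) / ((⌈1 / ε⌉ : ℝ) - 1)) * ((1 : ℝ) / (⌈1 / ε⌉ : ℝ)) *
          TTV x 0 t (1 / (⌈1 / ε⌉ : ℝ)) :=
  statement14_general x hx t ε hε0 hε1
end
end

section
/- Let x: [0,∞) → ℝ be càdlàg and ε > 0. Define x̃^ε_t := x_0 + UTV(x,[0,t],ε) − DTV(x,[0,t],ε) for t ≥ 0. Then |x̃^ε_t − x_t| ≤ ε for every t ≥ 0; that is, the path x̃^ε uniformly approximates x with accuracy ε. -/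
/-!
Every sum of upward ε-truncated increments over a partition of `[a, b]` can be matched, greedily
from left to right, by a sum `w` of downward ε-truncated increments over a partition of `[a, e]`
with `e` at most the last point, such that the upward sum is at most `x e - x a + w`. Appending the
step from `e` to `b` gives `UTV ≤ x b - x a + ε + DTV`, and the same for `-x` gives the reverse
inequality. All of this needs the suprema to be finite; for a càdlàg path this follows by a
continuity induction on the right endpoint, since on a short interval to the left of a point
(resp. to the right of it) the path stays within `ε / 2` of its left limit (resp. of its value),
so only the partition steps entering or leaving that interval contribute.
-/

open MeasureTheory Filter Topology Set
open scoped Classical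

noncomputable section

open Finset

def partitionSums (φ : ℝ → ℝ → ℝ) (a b : ℝ) : Set ℝ :=
  {v : ℝ | ∃ (n : ℕ) (t : ℕ → ℝ), a ≤ t 0 ∧ t n ≤ b ∧ (∀ i, i < n → t i < t (i + 1)) ∧
    v = ∑ i ∈ range n, φ (t i) (t (i + 1))}

/-- `IsPartitionSum φ a b v`: `v = ∑ φ tᵢ tᵢ₊₁` for a partition `a = t₀ < ⋯ < tₙ = b`. -/
inductive IsPartitionSum (φ : ℝ → ℝ → ℝ) (a : ℝ) : ℝ → ℝ → Prop
  | refl : IsPartitionSum φ a a 0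
  | snoc {b c v : ℝ} : IsPartitionSum φ a b v → b < c → IsPartitionSum φ a c (v + φ b c)

section PartitionSums

variable {φ ψ : ℝ → ℝ → ℝ} {a b p q v : ℝ}

namespace IsPartitionSum

theorem le (h : IsPartitionSum φ a b v) : a ≤ b := by
  induction h with
  | refl => exact le_rfl
  | snoc _ hbc ih => exact ih.trans hbc.le

theorem eq_zero_of_self (h : IsPartitionSum φ a a v) : v = 0 := by
  cases h with
  | refl => rfl
  | snoc h hba => exact absurd h.le (not_le.mpr hba)

theorem of_seq {n : ℕ} {t : ℕ → ℝ} (ht : ∀ i, i < n → t i < t (i + 1)) :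
    IsPartitionSum φ (t 0) (t n) (∑ i ∈ range n, φ (t i) (t (i + 1))) := by
  induction n with
  | zero => simpa using refl
  | succ n ih =>
    rw [sum_range_succ]
    exact (ih fun i hi => ht i (by omega)).snoc (ht n (by omega))

theorem exists_seq (h : IsPartitionSum φ a b v) :
    ∃ (n : ℕ) (t : ℕ → ℝ), t 0 = a ∧ t n = b ∧ (∀ i, i < n → t i < t (i + 1)) ∧
      v = ∑ i ∈ range n, φ (t i) (t (i + 1)) := by
  induction h with
  | refl => exact ⟨0, fun _ => a, rfl, rfl, by simp, by simp⟩
  | @snoc b c v _ hbc ih =>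
    obtain ⟨n, t, h0, hn, ht, rfl⟩ := ih
    refine ⟨n + 1, fun i => if i ≤ n then t i else c, by simpa using h0, by simp, ?_, ?_⟩
    · intro i hi
      rcases Nat.lt_succ_iff_lt_or_eq.mp hi with hi | rfl
      · simpa [hi.le, Nat.succ_le_of_lt hi] using ht i hi
      · simpa [hn] using hbc
    · rw [sum_range_succ]
      congr 1
      · exact sum_congr rfl fun i hi => by
          simp [(mem_range.mp hi).le, Nat.succ_le_of_lt (mem_range.mp hi)]
      · simp [hn]

end IsPartitionSum

theorem mem_partitionSums_iff :
    v ∈ partitionSums φ a b ↔ ∃ p q, a ≤ p ∧ q ≤ b ∧ IsPartitionSum φ p q v := by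
  constructor
  · rintro ⟨n, t, h0, hn, ht, rfl⟩
    exact ⟨t 0, t n, h0, hn, .of_seq ht⟩
  · rintro ⟨p, q, hap, hqb, h⟩
    obtain ⟨n, t, rfl, rfl, ht, rfl⟩ := h.exists_seq
    exact ⟨n, t, hap, hqb, ht, rfl⟩

theorem IsPartitionSum.mem_partitionSums (h : IsPartitionSum φ p q v) (hap : a ≤ p)
    (hqb : q ≤ b) : v ∈ partitionSums φ a b :=
  mem_partitionSums_iff.2 ⟨p, q, hap, hqb, h⟩

theorem zero_mem_partitionSums (hab : a ≤ b) : 0 ∈ partitionSums φ a b :=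
  IsPartitionSum.refl.mem_partitionSums le_rfl hab

theorem bddAbove_partitionSums_self : BddAbove (partitionSums φ a a) := by
  refine ⟨0, fun v hv => ?_⟩
  obtain ⟨p, q, hap, hqa, h⟩ := mem_partitionSums_iff.1 hv
  obtain rfl : p = q := le_antisymm h.le (hqa.trans hap)
  exact h.eq_zero_of_self.le

theorem BddAbove.partitionSums_of_le (h : BddAbove (partitionSums ψ a b))
    (hφψ : ∀ u v, φ u v ≤ ψ u v) : BddAbove (partitionSums φ a b) := by
  obtain ⟨M, hM⟩ := h
  refine ⟨M, ?_⟩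
  rintro _ ⟨n, t, h0, hn, ht, rfl⟩
  exact (sum_le_sum fun i _ => hφψ _ _).trans (hM ⟨n, t, h0, hn, ht, rfl⟩)

end PartitionSums

section UpDown

variable {y : ℝ → ℝ} {ε a b p q e w S : ℝ}

theorem UTV_eq_sSup_partitionSums :
    UTV y a b ε = sSup (partitionSums (fun u v => max (y v - y u - ε) 0) a b) := rfl

theorem DTV_eq_sSup_partitionSums :
    DTV y a b ε = sSup (partitionSums (fun u v => max (y u - y v - ε) 0) a b) := rfl

theorem DTV_eq_UTV_neg : DTV y a b ε = UTV (-y) a b ε := by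
  simp only [DTV_eq_sSup_partitionSums, UTV_eq_sSup_partitionSums, Pi.neg_apply, neg_sub_neg]

theorem exists_downSum_extend (hε : 0 ≤ ε)
    (h : IsPartitionSum (fun u v => max (y u - y v - ε) 0) a e w) (heb : e ≤ b) :
    ∃ w', IsPartitionSum (fun u v => max (y u - y v - ε) 0) a b w' ∧ w + (y e - y b - ε) ≤ w' := by
  rcases heb.eq_or_lt with rfl | hlt
  · exact ⟨w, h, by linarith⟩
  · exact ⟨_, h.snoc hlt, by linarith [le_max_left (y e - y b - ε) 0]⟩

theorem exists_downSum_of_upSum (hε : 0 ≤ ε)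
    (h : IsPartitionSum (fun u v => max (y v - y u - ε) 0) p q S) (hap : a ≤ p) :
    ∃ e w, e ≤ q ∧ IsPartitionSum (fun u v => max (y u - y v - ε) 0) a e w ∧
      S ≤ y e - y a + w := by
  induction h with
  | refl => exact ⟨a, 0, hap, .refl, by simp⟩
  | @snoc b c S _ hbc ih =>
    obtain ⟨e, w, heb, hw, hS⟩ := ih
    rcases le_or_gt (y c - y b) ε with hsmall | hbig
    · exact ⟨e, w, heb.trans hbc.le, hw, by rw [max_eq_right (by linarith)]; linarith⟩
    · obtain ⟨w₁, hw₁, hw₁w⟩ := exists_downSum_extend hε hw heb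
      refine ⟨c, _, le_rfl, hw₁.snoc hbc, ?_⟩
      rw [max_eq_left (by linarith)]
      linarith [le_max_right (y b - y c - ε) 0]

theorem UTV_le_sub_add_DTV (hε : 0 ≤ ε) (hab : a ≤ b)
    (hD : BddAbove (partitionSums (fun u v => max (y u - y v - ε) 0) a b)) :
    UTV y a b ε ≤ y b - y a + ε + DTV y a b ε := by
  rw [UTV_eq_sSup_partitionSums]
  refine csSup_le ⟨0, zero_mem_partitionSums hab⟩ fun S hS => ?_
  obtain ⟨p, q, hap, hqb, hS⟩ := mem_partitionSums_iff.1 hS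
  obtain ⟨e, w, heq, hw, hSw⟩ := exists_downSum_of_upSum hε hS hap
  obtain ⟨w', hw', hww'⟩ := exists_downSum_extend hε hw (heq.trans hqb)
  have hw'D : w' ≤ DTV y a b ε := le_csSup hD (hw'.mem_partitionSums le_rfl le_rfl)
  linarith

end UpDown

section Cadlag

variable {x : ℝ → ℝ} {ε a b c M : ℝ}

theorem abs_le_of_near_const (hε : 0 ≤ ε) (ha : 0 ≤ a)
    (hM : ∀ v ∈ partitionSums (fun u v => max (|x v - x u| - ε) 0) 0 a, v ≤ M)
    (hc : ∀ s ∈ Ioo a b, |x s - c| ≤ ε / 2) :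
    ∀ s ∈ Icc 0 b, |x s| ≤ max (|x 0| + M + ε) (max (|c| + ε / 2) |x b|) := by
  have hM0 : 0 ≤ M := hM 0 (zero_mem_partitionSums ha)
  rintro s ⟨hs0, hsb⟩
  rcases le_or_gt s a with hsa | hsa
  · have hstep : |x s - x 0| - ε ≤ M := by
      rcases hs0.eq_or_lt with rfl | hs0
      · simp only [sub_self, abs_zero]; linarith
      · have := hM _ ((IsPartitionSum.refl.snoc hs0).mem_partitionSums le_rfl hsa)
        rw [zero_add] at this
        exact (le_max_left _ _).trans this
    have := abs_sub_abs_le_abs_sub (x s) (x 0)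
    exact le_max_of_le_left (by linarith)
  · rcases hsb.lt_or_eq with hsb | rfl
    · have := abs_sub_abs_le_abs_sub (x s) c
      exact le_max_of_le_right (le_max_of_le_left (by linarith [hc s ⟨hsa, hsb⟩]))
    · exact le_max_of_le_right (le_max_right _ _)

theorem bddAbove_ttvSums_of_near_const (hε : 0 ≤ ε) (ha : 0 ≤ a) (hab : a ≤ b)
    (hM : ∀ v ∈ partitionSums (fun u v => max (|x v - x u| - ε) 0) 0 a, v ≤ M)
    (hc : ∀ s ∈ Ioo a b, |x s - c| ≤ ε / 2) :
    BddAbove (partitionSums (fun u v => max (|x v - x u| - ε) 0) 0 b) := by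
  set φ : ℝ → ℝ → ℝ := fun u v => max (|x v - x u| - ε) 0
  set B := max (|x 0| + M + ε) (max (|c| + ε / 2) |x b|)
  have hxB := abs_le_of_near_const hε ha hM hc
  have hM0 : 0 ≤ M := hM 0 (zero_mem_partitionSums ha)
  have hB0 : 0 ≤ B := (abs_nonneg _).trans (hxB 0 ⟨le_rfl, ha.trans hab⟩)
  have hφB : ∀ u v, 0 ≤ u → u ≤ v → v ≤ b → φ u v ≤ 2 * B := fun u v hu0 huv hvb => by
    have hu := hxB u ⟨hu0, huv.trans hvb⟩
    have hv := hxB v ⟨hu0.trans huv, hvb⟩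
    have := abs_sub (x v) (x u)
    exact max_le (by linarith) (by linarith)
  have hφ0 : ∀ u ∈ Ioo a b, ∀ v ∈ Ioo a b, φ u v = 0 := fun u hu v hv => by
    have := abs_sub_le (x v) c (x u)
    rw [abs_sub_comm c] at this
    exact max_eq_right (by linarith [hc u hu, hc v hv])
  have hbelow : ∀ {p q v}, IsPartitionSum φ p q v → 0 ≤ p → q < b → v ≤ M + 2 * B := by
    intro p q v h hp hqb
    induction h with
    | refl => linarith
    | @snoc q' q v h hq'q ih =>
      rcases le_or_gt q a with hqa | hqa
      · linarith [hM _ ((h.snoc hq'q).mem_partitionSums hp hqa)]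
      rcases le_or_gt q' a with hq'a | hq'a
      · linarith [hM _ (h.mem_partitionSums hp hq'a), hφB q' q (hp.trans h.le) hq'q.le hqb.le]
      · rw [hφ0 q' ⟨hq'a, hq'q.trans hqb⟩ q ⟨hqa, hqb⟩]
        linarith [ih (hq'q.trans hqb)]
  refine ⟨M + 4 * B, fun v hv => ?_⟩
  obtain ⟨p, q, hp, hqb, h⟩ := mem_partitionSums_iff.1 hv
  cases h with
  | refl => linarith
  | snoc h hq'q =>
    linarith [hbelow h hp (hq'q.trans_le hqb), hφB _ q (hp.trans h.le) hq'q.le hqb]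

theorem exists_Ioo_abs_sub_le_of_tendsto {f : ℝ → ℝ} {u L δ : ℝ}
    (h : Tendsto f (𝓝[<] u) (𝓝 L)) (hδ : 0 < δ) : ∃ l < u, ∀ s ∈ Ioo l u, |f s - L| ≤ δ := by
  have := h.eventually (Metric.closedBall_mem_nhds L hδ)
  obtain ⟨l, hlu, hl⟩ := mem_nhdsLT_iff_exists_Ioo_subset.mp this
  exact ⟨l, hlu, fun s hs => by simpa [Real.dist_eq] using hl hs⟩

theorem exists_Ico_abs_sub_le_of_continuousWithinAt {f : ℝ → ℝ} {u δ : ℝ}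
    (h : ContinuousWithinAt f (Ici u) u) (hδ : 0 < δ) :
    ∃ w > u, ∀ s ∈ Ico u w, |f s - f u| ≤ δ := by
  have := h.eventually (Metric.closedBall_mem_nhds (f u) hδ)
  obtain ⟨w, huw, hw⟩ := mem_nhdsGE_iff_exists_Ico_subset.mp this
  exact ⟨w, huw, fun s hs => by simpa [Real.dist_eq] using hw hs⟩

theorem bddAbove_ttvSums (hx : Cadlag x) (hε : 0 < ε) {t : ℝ} (ht : 0 ≤ t) :
    BddAbove (partitionSums (fun u v => max (|x v - x u| - ε) 0) 0 t) := by
  set A := {b | b ∈ Icc 0 t ∧ BddAbove (partitionSums (fun u v => max (|x v - x u| - ε) 0) 0 b)}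
  have h0A : 0 ∈ A := ⟨⟨le_rfl, ht⟩, bddAbove_partitionSums_self⟩
  have hAb : BddAbove A := ⟨t, fun b hb => hb.1.2⟩
  set u := sSup A
  have hu0 : 0 ≤ u := le_csSup hAb h0A
  have hut : u ≤ t := csSup_le ⟨0, h0A⟩ fun b hb => hb.1.2
  have huA : u ∈ A := by
    refine ⟨⟨hu0, hut⟩, ?_⟩
    rcases hu0.eq_or_lt with hu | hu
    · exact hu ▸ bddAbove_partitionSums_self
    obtain ⟨l, hlu, hl⟩ := exists_Ioo_abs_sub_le_of_tendsto (hx.2 u hu) (half_pos hε)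
    obtain ⟨a, haA, hla⟩ := exists_lt_of_lt_csSup ⟨0, h0A⟩ hlu
    obtain ⟨M, hM⟩ := haA.2
    exact bddAbove_ttvSums_of_near_const hε.le haA.1.1 (le_csSup hAb haA) hM
      fun s hs => hl s ⟨hla.trans hs.1, hs.2⟩
  rcases hut.eq_or_lt with hut | hut
  · exact hut ▸ huA.2
  obtain ⟨w, huw, hw⟩ := exists_Ico_abs_sub_le_of_continuousWithinAt (hx.1 u hu0) (half_pos hε)
  obtain ⟨M, hM⟩ := huA.2
  have hmid : u < (u + w) / 2 ∧ (u + w) / 2 < w := ⟨by linarith, by linarith⟩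
  have hbA : min t ((u + w) / 2) ∈ A := by
    refine ⟨⟨hu0.trans (le_min hut.le hmid.1.le), min_le_left _ _⟩, ?_⟩
    refine bddAbove_ttvSums_of_near_const hε.le hu0 (le_min hut.le hmid.1.le) hM
      fun s hs => hw s ⟨hs.1.le, (hs.2.trans_le (min_le_right _ _)).trans hmid.2⟩
  exact absurd (le_csSup hAb hbA) (not_le.mpr (lt_min hut hmid.1))

end Cadlag

/-- `x̃ᵉ_t = x_0 + UTV(x,[0,t],ε) - DTV(x,[0,t],ε)` approximates `x`
uniformly with accuracy `ε`. -/
theorem statement15 (x : ℝ → ℝ) (hx : Cadlag x) (ε : ℝ) (hε : 0 < ε)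
    (t : ℝ) (ht : 0 ≤ t) :
    |x 0 + UTV x 0 t ε - DTV x 0 t ε - x t| ≤ ε := by
  have hTTV := bddAbove_ttvSums hx hε ht
  have hup := UTV_le_sub_add_DTV (y := x) hε.le ht <| hTTV.partitionSums_of_le fun u v =>
    max_le_max_right 0 <| sub_le_sub_right (abs_sub_comm (x v) (x u) ▸ le_abs_self _) ε
  have hdown := UTV_le_sub_add_DTV (y := -x) hε.le ht <| hTTV.partitionSums_of_le fun u v =>
    max_le_max_right 0 <| sub_le_sub_right
      (by simp only [Pi.neg_apply, neg_sub_neg]; exact le_abs_self _) ε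
  rw [← DTV_eq_UTV_neg, DTV_eq_UTV_neg (y := -x), neg_neg] at hdown
  simp only [Pi.neg_apply] at hdown
  rw [abs_le]
  constructor <;> linarith
end
end
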